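/- arXiv:math/0505151 — 7 statements merged into one kernel-verified Lean document; each statement's English description precedes it below -/
import Mathlib

section
/- Let C be a category. Inside the group Aut(C) of automorphisms of C, the inner automorphisms form a normal subgroup Int(C), the stable automorphisms form a normal subgroup StAut(C), and the equinumerous automorphisms form a normal subgroup EqnAut(C); moreover Int(C) ⊆ EqnAut(C) and StAut(C) ⊆ EqnAut(C). -/
/-!
Each of the three classes consists of the automorphisms of `C` that are congruent to the
identity for a congruence on `Cat`: natural isomorphism, equality on objects, and objectwise
isomorphism. Such a class is the kernel of the induced map from `Aut C` to the automorphism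
group of `C` in the quotient category, hence a normal subgroup, and the inclusions come from
the inclusions between the congruences.
-/

open CategoryTheory

universe v u

namespace CategoryTheory

namespace Quotient

variable {D : Type*} [Category D]

theorem mem_ker_mapAut_functor_iff (r : HomRel D) [Congruence r] {X : D} (φ : Aut X) :
    φ ∈ ((functor r).mapAut X).ker ↔ r φ.hom (𝟙 X) := by
  rw [MonoidHom.mem_ker, ← functor_map_eq_iff r, Functor.map_id]
  exact ⟨congrArg Iso.hom, fun h => Iso.ext h⟩

theorem ker_mapAut_functor_mono {r s : HomRel D} [Congruence r] [Congruence s]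
    (hrs : ∀ {X Y : D} {f g : X ⟶ Y}, r f g → s f g) (X : D) :
    ((functor r).mapAut X).ker ≤ ((functor s).mapAut X).ker := fun φ hφ =>
  (mem_ker_mapAut_functor_iff s φ).2 (hrs ((mem_ker_mapAut_functor_iff r φ).1 hφ))

end Quotient

namespace Cat

theorem objects_homRel_iff {C D : Cat.{v, u}} (F G : C ⟶ D) :
    objects.homRel F G ↔ ∀ A, F.toFunctor.obj A = G.toFunctor.obj A := by
  rw [Functor.homRel_iff]
  exact ⟨fun h A => congrArg (fun f => TypeCat.Hom.hom f A) h, fun h => by ext A; exact h A⟩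

def natIsoRel : HomRel Cat.{v, u} := fun _ _ F G => Nonempty (F.toFunctor ≅ G.toFunctor)

def objIsoRel : HomRel Cat.{v, u} :=
  fun _ _ F G => ∀ A, Nonempty (F.toFunctor.obj A ≅ G.toFunctor.obj A)

instance : Congruence natIsoRel.{v, u} where
  equivalence := ⟨fun _ => ⟨Iso.refl _⟩, fun ⟨e⟩ => ⟨e.symm⟩, fun ⟨e⟩ ⟨e'⟩ => ⟨e ≪≫ e'⟩⟩
  comp_left F := fun ⟨e⟩ => ⟨Functor.isoWhiskerLeft F.toFunctor e⟩
  comp_right H := fun ⟨e⟩ => ⟨Functor.isoWhiskerRight e H.toFunctor⟩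

instance : Congruence objIsoRel.{v, u} where
  equivalence := ⟨fun _ _ => ⟨Iso.refl _⟩, fun h A => ⟨(h A).some.symm⟩,
    fun h h' A => ⟨(h A).some ≪≫ (h' A).some⟩⟩
  comp_left F := fun h A => h (F.toFunctor.obj A)
  comp_right H := fun h A => ⟨H.toFunctor.mapIso (h A).some⟩

theorem natIsoRel_le_objIsoRel {C D : Cat.{v, u}} {F G : C ⟶ D} (h : natIsoRel F G) :
    objIsoRel F G := fun A => ⟨h.some.app A⟩

theorem objects_homRel_le_objIsoRel {C D : Cat.{v, u}} {F G : C ⟶ D}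
    (h : objects.homRel F G) : objIsoRel F G :=
  fun A => ⟨eqToIso ((objects_homRel_iff F G).1 h A)⟩

end Cat

end CategoryTheory

/-- In the group `Aut C` of automorphisms of a category `C`, the inner,
stable, and equinumerous automorphisms form normal subgroups `Int`, `StAut`, `Eqn`,
with `Int ≤ Eqn` and `StAut ≤ Eqn`. -/
theorem stmt0 (C : Type u) [Category.{v} C] :
    ∃ (Int StAut Eqn : Subgroup (Aut (Cat.of C))),
      Int.Normal ∧ StAut.Normal ∧ Eqn.Normal ∧
      (∀ φ : Aut (Cat.of C), φ ∈ Int ↔ Nonempty ((φ.hom.toFunctor : C ⥤ C) ≅ 𝟭 C)) ∧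
      (∀ φ : Aut (Cat.of C), φ ∈ StAut ↔ ∀ A : C, (φ.hom.toFunctor : C ⥤ C).obj A = A) ∧
      (∀ φ : Aut (Cat.of C), φ ∈ Eqn ↔ ∀ A : C, Nonempty ((φ.hom.toFunctor : C ⥤ C).obj A ≅ A)) ∧
      Int ≤ Eqn ∧ StAut ≤ Eqn := by
  open Quotient in
  refine ⟨((functor Cat.natIsoRel).mapAut _).ker, ((functor Cat.objects.homRel).mapAut _).ker,
    ((functor Cat.objIsoRel).mapAut _).ker, inferInstance, inferInstance, inferInstance,
    fun φ => mem_ker_mapAut_functor_iff _ φ,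
    fun φ => (mem_ker_mapAut_functor_iff _ φ).trans (Cat.objects_homRel_iff _ _),
    fun φ => mem_ker_mapAut_functor_iff _ φ,
    ker_mapAut_functor_mono Cat.natIsoRel_le_objIsoRel _,
    ker_mapAut_functor_mono Cat.objects_homRel_le_objIsoRel _⟩
end

section
/- Let C be a category and φ an equinumerous automorphism of C. Then there exist a stable automorphism φ_S of C and an inner automorphism φ_I of C such that φ = φ_I ∘ φ_S (i.e., φ(f) = φ_I(φ_S(f)) for every morphism f of C). -/
/-!
Choose isomorphisms `η A : φ A ≅ A`. Transporting `φ` along them (`Functor.copyObj`) gives a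
functor `φS` that fixes every object and is naturally isomorphic to `φ`; hence it is fully
faithful and bijective on objects, i.e. an isomorphism of categories. Then `φI := φS⁻¹ ⋙ φ`
satisfies `φ = φS ⋙ φI`, and `φI ≅ φS⁻¹ ⋙ φS = 𝟭`.
-/

open CategoryTheory

universe v u

namespace CategoryTheory

variable {C D : Type u} [Category.{v} C] [Category.{v} D]

def IsoCat.toCatIso (e : IsoCat C D) : Cat.of C ≅ Cat.of D where
  hom := e.functor.toCatHom
  inv := e.inverse.toCatHom
  hom_inv_id := Cat.ext e.unit_eq.symm
  inv_hom_id := Cat.ext e.counit_eq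

def IsoCat.ofCatIso (e : Cat.of C ≅ Cat.of D) : IsoCat C D where
  functor := e.hom.toFunctor
  inverse := e.inv.toFunctor
  unit_eq := congrArg Cat.Hom.toFunctor e.hom_inv_id.symm
  counit_eq := congrArg Cat.Hom.toFunctor e.inv_hom_id

theorem Functor.IsIso.of_iso {F G : C ⥤ D} [F.IsIso] (α : F ≅ G) (hG : G.obj.Bijective) :
    G.IsIso where
  faithful := .of_iso α
  full := .of_iso α
  bijective_obj := hG

end CategoryTheory

/-- every equinumerous automorphism `φ` of a category `C` factors as
`φ = φ_I ∘ φ_S` with `φ_S` a stable automorphism and `φ_I` an inner automorphism. -/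
theorem stmt1 (C : Type u) [Category.{v} C] (φ : Aut (Cat.of C))
    (hφ : ∀ A : C, Nonempty ((φ.hom.toFunctor : C ⥤ C).obj A ≅ A)) :
    ∃ φS φI : Aut (Cat.of C),
      (∀ A : C, (φS.hom.toFunctor : C ⥤ C).obj A = A) ∧
      Nonempty ((φI.hom.toFunctor : C ⥤ C) ≅ 𝟭 C) ∧
      (φ.hom.toFunctor : C ⥤ C) = (φS.hom.toFunctor : C ⥤ C) ⋙ (φI.hom.toFunctor : C ⥤ C) := by
  let F : C ⥤ C := φ.hom.toFunctor
  have : F.IsIso := (IsoCat.ofCatIso φ).isIso_functor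
  let S := F.copyObj id fun A => (hφ A).some
  have : S.IsIso := .of_iso (F.isoCopyObj _ _) Function.bijective_id
  refine ⟨S.asIsomorphism.toCatIso, (S.asIsomorphism.symm.trans (.ofCatIso φ)).toCatIso,
    fun _ => rfl, ⟨?_⟩, ?_⟩
  · exact Functor.isoWhiskerLeft S.strictInv (F.isoCopyObj _ _) ≪≫
      eqToIso S.asIsomorphism.counit_eq
  · show F = S ⋙ S.strictInv ⋙ F
    rw [← Functor.assoc]
    exact congrArg (· ⋙ F) S.asIsomorphism.unit_eq
end

section
/- Let R be a ring with invariant basis number, and let φ be an automorphism of the category S_R that fixes every object and satisfies φ(μ_i) = μ_i for every canonical injection μ_i : R → R^n (for all 1 ≤ i ≤ n and all n ∈ ℕ). Then there exists a ring automorphism σ of R such that φ = φ^σ, the skew-inner automorphism determined by σ. -/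
/-
Every endomorphism of `R^1` is a right multiplication `ρ_r`, so `φ(ρ_r) = ρ_{σ r}` defines a
bijection `σ : R → R`, multiplicative because `ρ_{rs} = ρ_r ≫ ρ_s`. Since `μ_i ≫ π_j` is either
the identity or factors through `R^0`, `φ` also fixes the projections `π_j` and, testing against
the `μ_i` once more, the codiagonal `∇ : R^n → R`. Testing against the `π_j`, `φ` sends the map
`R → R^m`, `x ↦ x v` to `x ↦ x (σ ∘ v)`; with `ρ_{∑ v} = (x ↦ x v) ≫ ∇` this makes `σ` additive,
and applied to the rows `μ_i ≫ f` it gives `φ(f) = φ^σ(f)`.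
-/

open CategoryTheory

/-- The category `S_R`: objects are the natural numbers, the object `n` standing for the
free left `R`-module `R^n = (Fin n → R)`; morphisms `n ⟶ m` are the `R`-linear maps
`R^n → R^m`.  This is (a presentation of) the full subcategory of left `R`-modules with
objects exactly the modules `R^n`, `n ∈ ℕ`. -/
def SR (R : Type) [Ring R] : Type := ℕ

instance (R : Type) [Ring R] : Category (SR R) where
  Hom n m := (Fin n → R) →ₗ[R] (Fin m → R)
  id _ := LinearMap.id
  comp f g := g.comp f
  id_comp f := LinearMap.comp_id f
  comp_id f := LinearMap.id_comp f
  assoc f g h := (LinearMap.comp_assoc f g h).symm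

variable {R : Type} [Ring R]

/-- The object of `S_R` corresponding to `n ∈ ℕ`, i.e. the module `R^n`. -/
def ob (R : Type) [Ring R] (n : ℕ) : SR R := n

/-- A morphism of `S_R` is just an `R`-linear map. -/
def ofLin {n m : ℕ} (f : (Fin n → R) →ₗ[R] (Fin m → R)) : ob R n ⟶ ob R m := f

/-- The underlying `R`-linear map of a morphism of `S_R`. -/
def toLin {n m : SR R} (f : n ⟶ m) : (Fin n → R) →ₗ[R] (Fin m → R) := f

/-- The canonical injection `μ_i : R = R^1 → R^n` into the `i`-th coordinate,
as a morphism of `S_R`. -/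
def mu (R : Type) [Ring R] (n : ℕ) (i : Fin n) : ob R 1 ⟶ ob R n :=
  ofLin ((LinearMap.single R (fun _ : Fin n => R) i).comp (LinearMap.proj 0))

/-- The skew of an `R`-linear map `f : R^n → R^m` by a ring automorphism `σ` of `R`:
the map `σ_m ∘ f ∘ σ_n⁻¹`, where `σ_k : R^k → R^k` is the coordinatewise application
of `σ`.  It is again `R`-linear. -/
def skewMap (σ : R ≃+* R) {n m : ℕ} (f : (Fin n → R) →ₗ[R] (Fin m → R)) :
    (Fin n → R) →ₗ[R] (Fin m → R) where
  toFun x := fun j => σ (f (fun i => σ.symm (x i)) j)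
  map_add' x y := by
    funext j
    have h : (fun i => σ.symm ((x + y) i)) =
        (fun i => σ.symm (x i)) + (fun i => σ.symm (y i)) := by
      funext i; simp
    show σ (f (fun i => σ.symm ((x + y) i)) j) =
      σ (f (fun i => σ.symm (x i)) j) + σ (f (fun i => σ.symm (y i)) j)
    rw [h, map_add]
    simp
  map_smul' r x := by
    funext j
    have h : (fun i => σ.symm ((r • x) i)) =
        σ.symm r • (fun i => σ.symm (x i)) := by
      funext i; simp [Pi.smul_apply, map_mul]
    show σ (f (fun i => σ.symm ((r • x) i)) j) = ((RingHom.id R) r • fun j' => σ (f (fun i => σ.symm (x i)) j')) j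
    rw [h, map_smul]
    simp [Pi.smul_apply, map_mul]

/-- The skew-inner automorphism `φ^σ` of the category `S_R` determined by a ring
automorphism `σ` of `R`: it fixes all objects and sends `f : R^n → R^m` to
`σ_m ∘ f ∘ σ_n⁻¹`. -/
def skewFunctor (σ : R ≃+* R) : SR R ⥤ SR R where
  obj n := n
  map {n m} f := ofLin (skewMap σ (toLin f))
  map_id n := by
    show ofLin (skewMap σ LinearMap.id) = LinearMap.id
    apply LinearMap.ext
    intro x
    show (fun j => σ (σ.symm (x j))) = x
    funext j; simp
  map_comp {n m k} f g := by
    show ofLin (skewMap σ ((toLin g).comp (toLin f))) =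
      (skewMap σ (toLin g)).comp (skewMap σ (toLin f))
    apply LinearMap.ext
    intro x
    show (fun j => σ ((toLin g) ((toLin f) (fun i => σ.symm (x i))) j)) =
      (fun j => σ ((toLin g) (fun i => σ.symm (σ ((toLin f) (fun i' => σ.symm (x i')) i))) j))
    simp

namespace SR

-- `toLin f` would act on `Fin (ob R n) → R`, where instances stated for `Fin n` are not found.
def lin {n m : ℕ} (f : ob R n ⟶ ob R m) : (Fin n → R) →ₗ[R] (Fin m → R) := f

lemma hom_ext {n m : ℕ} {f g : ob R n ⟶ ob R m} (h : ∀ x, lin f x = lin g x) : f = g :=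
  LinearMap.ext h

@[simp]
lemma lin_comp {n m k : ℕ} (f : ob R n ⟶ ob R m) (g : ob R m ⟶ ob R k) (x : Fin n → R) :
    lin (f ≫ g) x = lin g (lin f x) := rfl

@[simp]
lemma lin_id {n : ℕ} (x : Fin n → R) : lin (𝟙 (ob R n)) x = x := rfl

@[simp]
lemma lin_ofLin {n m : ℕ} (f : (Fin n → R) →ₗ[R] (Fin m → R)) : lin (ofLin f) = f := rfl

def ofRow {m : ℕ} (v : Fin m → R) : ob R 1 ⟶ ob R m :=
  ofLin ((LinearMap.proj (0 : Fin 1) : (Fin 1 → R) →ₗ[R] R).smulRight v)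

@[simp]
lemma lin_ofRow {m : ℕ} (v : Fin m → R) (x : Fin 1 → R) : lin (ofRow v) x = x 0 • v := rfl

lemma ofRow_lin_one {m : ℕ} (f : ob R 1 ⟶ ob R m) : ofRow (lin f 1) = f := by
  refine hom_ext fun x => ?_
  rw [lin_ofRow, ← map_smul]
  congr 1
  funext k
  simp [Subsingleton.elim k 0]

lemma ofRow_comp {m k : ℕ} (v : Fin m → R) (g : ob R m ⟶ ob R k) :
    ofRow v ≫ g = ofRow (lin g v) := by
  refine hom_ext fun x => ?_
  simp

lemma mu_eq_ofRow (n : ℕ) (i : Fin n) : mu R n i = ofRow (Pi.single i 1) := by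
  refine hom_ext fun x => ?_
  funext j
  rw [lin_ofRow]
  simp [mu, lin, ofLin, Pi.single_apply]

def rmul (r : R) : ob R 1 ⟶ ob R 1 := ofRow fun _ => r

lemma rmul_one : rmul (1 : R) = 𝟙 (ob R 1) := by
  refine hom_ext fun x => ?_
  funext k
  simp [rmul, Subsingleton.elim k 0]

lemma rmul_mul (r s : R) : rmul (r * s) = rmul r ≫ rmul s := by
  rw [rmul, rmul, ofRow_comp]
  congr 1

def rmulEquiv : R ≃ (ob R 1 ⟶ ob R 1) where
  toFun := rmul
  invFun f := lin f 1 0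
  left_inv r := by simp [rmul]
  right_inv f := by
    conv_rhs => rw [← ofRow_lin_one f]
    show ofRow _ = _
    congr 1
    funext k
    rw [Subsingleton.elim k 0]

def ofCol {n : ℕ} (ℓ : (Fin n → R) →ₗ[R] R) : ob R n ⟶ ob R 1 :=
  ofLin (ℓ.smulRight 1)

lemma ofRow_comp_ofCol {n : ℕ} (v : Fin n → R) (ℓ : (Fin n → R) →ₗ[R] R) :
    ofRow v ≫ ofCol ℓ = rmul (ℓ v) := by
  rw [ofRow_comp, rmul]
  congr 1
  funext k
  simp [ofCol]

lemma hom_ext_mu {n m : ℕ} {f g : ob R n ⟶ ob R m}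
    (h : ∀ i, mu R n i ≫ f = mu R n i ≫ g) : f = g := by
  change lin f = lin g
  refine (Pi.basisFun R (Fin n)).ext fun i => ?_
  simpa [mu_eq_ofRow, ofRow_comp] using congrArg (fun u => lin u 1) (h i)

lemma hom_ext_proj {n m : ℕ} {f g : ob R n ⟶ ob R m}
    (h : ∀ j, f ≫ ofCol (LinearMap.proj j) = g ≫ ofCol (LinearMap.proj j)) : f = g := by
  refine hom_ext fun x => funext fun j => ?_
  simpa [ofCol] using congrFun (congrArg (fun u => lin u x) (h j)) 0

lemma rmul_zero_eq_comp (t : ob R 1 ⟶ ob R 0) (u : ob R 0 ⟶ ob R 1) :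
    rmul (0 : R) = t ≫ u := by
  refine hom_ext fun x => ?_
  rw [lin_comp, Subsingleton.elim (lin t x) 0, map_zero, rmul, lin_ofRow]
  funext k
  simp

lemma skewMap_single (σ : R ≃+* R) {n m : ℕ} (f : (Fin n → R) →ₗ[R] (Fin m → R))
    (i : Fin n) :
    skewMap σ f (Pi.single i 1) = σ ∘ f (Pi.single i 1) := by
  have h : (fun t => σ.symm ((Pi.single i (1 : R) : Fin n → R) t)) = Pi.single i 1 := by
    funext t
    simp [Pi.single_apply, apply_ite σ.symm]
  exact congrArg (fun w => σ ∘ f w) h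

end SR

open SR

/-- An identity-on-objects endofunctor of `S_R` fixing every `μ_i`, given by its action on
morphisms. -/
structure MuFixingEndo (R : Type) [Ring R] where
  map : ∀ {n m : ℕ}, (ob R n ⟶ ob R m) → (ob R n ⟶ ob R m)
  map_id : ∀ n, map (𝟙 (ob R n)) = 𝟙 (ob R n)
  map_comp : ∀ {n m k : ℕ} (f : ob R n ⟶ ob R m) (g : ob R m ⟶ ob R k),
    map (f ≫ g) = map f ≫ map g
  map_mu : ∀ n i, map (mu R n i) = mu R n i

namespace MuFixingEndo

variable (P : MuFixingEndo R)

def scalar (r : R) : R := rmulEquiv.symm (P.map (rmul r))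

lemma map_rmul (r : R) : P.map (rmul r) = rmul (P.scalar r) :=
  (rmulEquiv.apply_symm_apply _).symm

lemma scalar_eq_of_map_rmul {r s : R} (h : P.map (rmul r) = rmul s) : P.scalar r = s :=
  rmulEquiv.injective ((P.map_rmul r).symm.trans h)

lemma map_rmul_zero : P.map (rmul (0 : R)) = rmul 0 := by
  let t : ob R 1 ⟶ ob R 0 := ofLin 0
  let u : ob R 0 ⟶ ob R 1 := ofLin 0
  have ht : P.map t = t := hom_ext fun _ => Subsingleton.elim _ _
  have hu : P.map u = u := hom_ext fun x => by
    rw [Subsingleton.elim x 0, map_zero, map_zero]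
  rw [rmul_zero_eq_comp t u, P.map_comp, ht, hu]

lemma map_ofCol_of_mu_comp {n : ℕ} (ℓ : (Fin n → R) →ₗ[R] R)
    (hℓ : ∀ i, P.map (mu R n i ≫ ofCol ℓ) = mu R n i ≫ ofCol ℓ) :
    P.map (ofCol ℓ) = ofCol ℓ :=
  hom_ext_mu fun i => by rw [← hℓ i, P.map_comp, P.map_mu]

lemma map_ofCol_proj {n : ℕ} (j : Fin n) :
    P.map (ofCol (LinearMap.proj j)) = ofCol (LinearMap.proj j) := by
  refine P.map_ofCol_of_mu_comp _ fun i => ?_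
  rw [mu_eq_ofRow, ofRow_comp_ofCol, LinearMap.proj_apply, Pi.single_apply]
  split_ifs
  · rw [rmul_one, P.map_id]
  · exact P.map_rmul_zero

lemma map_ofCol_sum (n : ℕ) :
    P.map (ofCol (∑ j : Fin n, LinearMap.proj j)) = ofCol (∑ j : Fin n, LinearMap.proj j) := by
  refine P.map_ofCol_of_mu_comp _ fun i => ?_
  rw [mu_eq_ofRow, ofRow_comp_ofCol]
  simp [rmul_one, P.map_id]

lemma map_ofRow {m : ℕ} (v : Fin m → R) : P.map (ofRow v) = ofRow (P.scalar ∘ v) :=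
  hom_ext_proj fun j => by
    rw [ofRow_comp_ofCol, ← P.map_ofCol_proj j, ← P.map_comp, ofRow_comp_ofCol, P.map_rmul]
    rfl

lemma scalar_sum {n : ℕ} (v : Fin n → R) : P.scalar (∑ i, v i) = ∑ i, P.scalar (v i) := by
  have hsum (w : Fin n → R) :
      rmul (∑ i, w i) = ofRow w ≫ ofCol (∑ j, LinearMap.proj j) := by
    simp [ofRow_comp_ofCol]
  refine P.scalar_eq_of_map_rmul ?_
  rw [hsum, P.map_comp, map_ofRow, map_ofCol_sum, hsum]
  rfl

lemma scalar_mul (r s : R) : P.scalar (r * s) = P.scalar r * P.scalar s :=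
  P.scalar_eq_of_map_rmul <| by rw [rmul_mul, P.map_comp, map_rmul, map_rmul, rmul_mul]

def scalarHom : R →+* R where
  toFun := P.scalar
  map_one' := P.scalar_eq_of_map_rmul <| by rw [rmul_one, P.map_id]
  map_mul' := P.scalar_mul
  map_zero' := P.scalar_eq_of_map_rmul P.map_rmul_zero
  map_add' r s := by simpa using P.scalar_sum ![r, s]

noncomputable def scalarEquiv (hP : Function.Bijective (P.map : (ob R 1 ⟶ ob R 1) → _)) :
    R ≃+* R :=
  RingEquiv.ofBijective P.scalarHom (rmulEquiv.symm.bijective.comp (hP.comp rmulEquiv.bijective))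

lemma map_eq_skewMap (hP : Function.Bijective (P.map : (ob R 1 ⟶ ob R 1) → _)) {n m : ℕ}
    (f : ob R n ⟶ ob R m) : P.map f = ofLin (skewMap (P.scalarEquiv hP) (lin f)) :=
  hom_ext_mu fun i => by
    conv_lhs => rw [← P.map_mu, ← P.map_comp]
    rw [mu_eq_ofRow, ofRow_comp, map_ofRow, ofRow_comp, lin_ofLin, skewMap_single]
    rfl

section ofFunctor

variable (F : SR R ⥤ SR R) (hF : ∀ A : SR R, F.obj A = A)
  (hmu : ∀ (n : ℕ) (i : Fin n),
    F.map (mu R n i) = eqToHom (hF (ob R 1)) ≫ mu R n i ≫ eqToHom (hF (ob R n)).symm)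

def ofFunctor : MuFixingEndo R where
  map {n m} f := (eqToIso (hF (ob R n))).homCongr (eqToIso (hF (ob R m))) (F.map f)
  map_id n := by simp
  map_comp f g := by simp
  map_mu n i := by simp [hmu]

lemma ofFunctor_map_bijective (hFmap : ∀ X Y : SR R, Function.Bijective (F.map : (X ⟶ Y) → _))
    (n m : ℕ) : Function.Bijective ((ofFunctor F hF hmu).map : (ob R n ⟶ ob R m) → _) :=
  (Equiv.bijective _).comp (hFmap _ _)

lemma eq_skewFunctor_of_ofFunctor (σ : R ≃+* R)
    (h : ∀ {n m : ℕ} (f : ob R n ⟶ ob R m),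
      (ofFunctor F hF hmu).map f = ofLin (skewMap σ (lin f))) :
    F = skewFunctor σ :=
  CategoryTheory.Functor.ext hF fun X Y f => by
    rw [show (skewFunctor σ).map f = (ofFunctor F hF hmu).map f from
      (h (n := X) (m := Y) f).symm]
    change F.map f = eqToHom (hF X) ≫
      (eqToHom (hF X).symm ≫ F.map f ≫ eqToHom (hF Y)) ≫ eqToHom (hF Y).symm
    simp

end ofFunctor

end MuFixingEndo

theorem stmt3_general (R : Type) [Ring R]
    (φ : Aut (Cat.of (SR R)))
    (hobj : ∀ A : SR R, (φ.hom.toFunctor : SR R ⥤ SR R).obj A = A)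
    (hmu : ∀ (n : ℕ) (i : Fin n),
      (φ.hom.toFunctor : SR R ⥤ SR R).map (mu R n i) =
        eqToHom (hobj (ob R 1)) ≫ mu R n i ≫ eqToHom (hobj (ob R n)).symm) :
    ∃ σ : R ≃+* R, (φ.hom.toFunctor : SR R ⥤ SR R) = skewFunctor σ := by
  let P := MuFixingEndo.ofFunctor _ hobj hmu
  have hP : Function.Bijective (P.map : (ob R 1 ⟶ ob R 1) → _) :=
    MuFixingEndo.ofFunctor_map_bijective _ hobj hmu
      (Cat.equivOfIso φ).fullyFaithfulFunctor.map_bijective 1 1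
  exact ⟨P.scalarEquiv hP,
    MuFixingEndo.eq_skewFunctor_of_ofFunctor _ hobj hmu _ (P.map_eq_skewMap hP)⟩

/-- if `R` is a ring with invariant basis number and `φ` is an automorphism
of the category `S_R` fixing every object and every canonical injection
`μ_i : R → R^n`, then `φ = φ^σ` for some ring automorphism `σ` of `R`. -/
theorem stmt3 (R : Type) [Ring R]
    (hIBN : ∀ n m : ℕ, Nonempty ((Fin n → R) ≃ₗ[R] (Fin m → R)) → n = m)
    (φ : Aut (Cat.of (SR R)))
    (hobj : ∀ A : SR R, (φ.hom.toFunctor : SR R ⥤ SR R).obj A = A)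
    (hmu : ∀ (n : ℕ) (i : Fin n),
      (φ.hom.toFunctor : SR R ⥤ SR R).map (mu R n i) =
        eqToHom (hobj (ob R 1)) ≫ mu R n i ≫ eqToHom (hobj (ob R n)).symm) :
    ∃ σ : R ≃+* R, (φ.hom.toFunctor : SR R ⥤ SR R) = skewFunctor σ :=
  stmt3_general R φ hobj hmu
end

section
/- Let R be a ring with invariant basis number. Then every automorphism φ of the category S_R is semi-inner: there exist a ring automorphism σ of R and, for each n ∈ ℕ, an additive-group isomorphism s_n : R^n → φ(R^n) satisfying s_n(r·a) = σ(r)·s_n(a) for all r ∈ R and a ∈ R^n, such that φ(f) ∘ s_n = s_m ∘ f for every R-linear map f : R^n → R^m. -/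
/-
Make `S_R` preadditive. `R^(a+b)` with its coordinate projections is a biproduct of `R^a` and
`R^b`, and an automorphism `φ` of `S_R`, being an equivalence, is additive and preserves
biproducts. By IBN isomorphic objects have equal rank, so `rank φ(R^n) = n · rank φ(R^1)`;
as `φ` is essentially surjective, some such product is `1`, which forces `φ(R^1) = R^1`.
Let `e` be the basis vector of `R^1`. Then `R ≅ End(R^1)ᵐᵒᵖ` via right multiplications and
`R^n ≅ Hom(R^1, R^n)` via `a ↦ (e ↦ a)`.
Transporting along these, `σ` is `φ` acting on `End(R^1)` and `s_n` is `φ` acting on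
`Hom(R^1, R^n)`, followed by evaluation at the image of `e` in `φ(R^1)`; functoriality of `φ`
gives both identities.
-/

open CategoryTheory

variable {R : Type} [Ring R]

open Limits

namespace CategoryTheory.Functor.FullyFaithful

variable {C D : Type*} [Category C] [Category D] [Preadditive C] [Preadditive D]
  {F : C ⥤ D} [F.Additive] (hF : F.FullyFaithful)

def mapAddEquiv (X Y : C) : (X ⟶ Y) ≃+ (F.obj X ⟶ F.obj Y) :=
  { hF.homEquiv with map_add' _ _ := F.map_add }

noncomputable def ringEquivEnd (X : C) : End X ≃+* End (F.obj X) :=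
  { hF.mulEquivEnd X with map_add' _ _ := F.map_add }

end CategoryTheory.Functor.FullyFaithful

namespace CategoryTheory.Iso

variable {C : Type*} [Category C] [Preadditive C] {X Y : C} (α : X ≅ Y)

def precompAddEquiv (Z : C) : (Y ⟶ Z) ≃+ (X ⟶ Z) where
  toFun f := α.hom ≫ f
  invFun f := α.inv ≫ f
  left_inv f := by simp
  right_inv f := by simp
  map_add' f g := Preadditive.comp_add _ _ _ _ _ _

def conjRingEquiv : End X ≃+* End Y :=
  { α.conj with
    map_add' f g := (congrArg (α.inv ≫ ·) (Preadditive.add_comp _ _ _ f g α.hom)).trans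
      (Preadditive.comp_add _ _ _ _ _ _) }

end CategoryTheory.Iso

namespace SR

instance : Preadditive (SR R) where
  homGroup n m := inferInstanceAs (AddCommGroup ((Fin n → R) →ₗ[R] (Fin m → R)))
  add_comp _ _ _ _ _ _ := LinearMap.comp_add _ _ _
  comp_add _ _ _ _ _ _ := LinearMap.add_comp _ _ _

lemma ofLin_comp {n m k : ℕ} (f : (Fin n → R) →ₗ[R] (Fin m → R))
    (g : (Fin m → R) →ₗ[R] (Fin k → R)) : ofLin f ≫ ofLin g = ofLin (g ∘ₗ f) := rfl

lemma ofLin_id (n : ℕ) : ofLin LinearMap.id = 𝟙 (ob R n) := rfl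

lemma ofLin_zero (n m : ℕ) : ofLin 0 = (0 : ob R n ⟶ ob R m) := rfl

variable (R) in
def appendEquiv (a b : ℕ) : ((Fin a → R) × (Fin b → R)) ≃ₗ[R] (Fin (a + b) → R) :=
  (LinearEquiv.sumArrowLequivProdArrow _ _ R R).symm ≪≫ₗ
    LinearEquiv.funCongrLeft R R finSumFinEquiv.symm

variable (R) in
def binaryBicone (a b : ℕ) : BinaryBicone (ob R a) (ob R b) where
  pt := ob R (a + b)
  fst := ofLin (LinearMap.fst R _ _ ∘ₗ (appendEquiv R a b).symm.toLinearMap)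
  snd := ofLin (LinearMap.snd R _ _ ∘ₗ (appendEquiv R a b).symm.toLinearMap)
  inl := ofLin ((appendEquiv R a b).toLinearMap ∘ₗ LinearMap.inl R _ _)
  inr := ofLin ((appendEquiv R a b).toLinearMap ∘ₗ LinearMap.inr R _ _)
  inl_fst := by rw [ofLin_comp, ← ofLin_id]; congr 1; ext x; simp
  inl_snd := by rw [ofLin_comp, ← ofLin_zero]; congr 1; ext x; simp
  inr_fst := by rw [ofLin_comp, ← ofLin_zero]; congr 1; ext x; simp
  inr_snd := by rw [ofLin_comp, ← ofLin_id]; congr 1; ext x; simp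

lemma appendEquiv_inl_fst_add_inr_snd (a b : ℕ) :
    (appendEquiv R a b).toLinearMap ∘ₗ LinearMap.inl R _ _ ∘ₗ LinearMap.fst R _ _ ∘ₗ
        (appendEquiv R a b).symm.toLinearMap +
      (appendEquiv R a b).toLinearMap ∘ₗ LinearMap.inr R _ _ ∘ₗ LinearMap.snd R _ _ ∘ₗ
        (appendEquiv R a b).symm.toLinearMap = LinearMap.id := by
  refine LinearMap.ext fun x => ?_
  simp only [LinearMap.add_apply, LinearMap.comp_apply, ← map_add]
  simp

def binaryBiconeIsBilimit (a b : ℕ) : (binaryBicone R a b).IsBilimit :=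
  isBinaryBilimitOfTotal _ (congrArg ofLin (appendEquiv_inl_fst_add_inr_snd a b))

instance : HasBinaryBiproducts (SR R) where
  has_binary_biproduct a b :=
    HasBinaryBiproduct.mk ⟨binaryBicone R a b, binaryBiconeIsBilimit a b⟩

variable (R) in
noncomputable def biprodIso (a b : ℕ) : ob R a ⊞ ob R b ≅ ob R (a + b) :=
  (biprod.uniqueUpToIso _ _ (binaryBiconeIsBilimit a b)).symm

-- Objects of `SR R` are natural numbers; `rank` reads one as such, so that `+`, `*` are `ℕ`'s.
abbrev rank (X : SR R) : ℕ := X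

lemma rank_eq_of_iso [InvariantBasisNumber R] {X Y : SR R} (e : X ≅ Y) : rank X = rank Y :=
  eq_of_fin_equiv R
    (LinearEquiv.ofLinearMap (f := toLin e.hom) (g := toLin e.inv) e.inv_hom_id e.hom_inv_id)

section ObjectCount

variable [InvariantBasisNumber R] (F : SR R ⥤ SR R)

lemma rank_obj_add [F.Additive] (a b : ℕ) :
    rank (F.obj (ob R (a + b))) = rank (F.obj (ob R a)) + rank (F.obj (ob R b)) := by
  have := preservesBinaryBiproducts_of_preservesBiproducts F
  exact rank_eq_of_iso
    (F.mapIso (biprodIso R a b).symm ≪≫ F.mapBiprod _ _ ≪≫ biprodIso R _ _)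

lemma rank_obj_eq_mul [F.Additive] (n : ℕ) :
    rank (F.obj (ob R n)) = n * rank (F.obj (ob R 1)) := by
  induction n with
  | zero =>
    have h := rank_obj_add F 0 0
    rw [add_zero] at h
    omega
  | succ n ih => rw [rank_obj_add, ih]; ring

lemma rank_obj_one [F.Additive] [F.EssSurj] : rank (F.obj (ob R 1)) = 1 := by
  have h := rank_eq_of_iso (F.objObjPreimageIso (ob R 1))
  exact Nat.eq_one_of_mul_eq_one_left
    ((rank_obj_eq_mul F (F.objPreimage (ob R 1))).symm.trans h)

end ObjectCount

section SemiInner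

-- Vectors of `R^1` are typed `Fin 1 → R`: on `Fin (ob R 1)` the numeral `0` has no instance.

def homFromOne (X : SR R) (a : Fin X → R) : ob R 1 ⟶ X :=
  ofLin ((LinearMap.proj 0).smulRight a)

lemma toLin_homFromOne_apply {X : SR R} (a : Fin X → R) (x : Fin 1 → R) :
    toLin (homFromOne X a) x = x 0 • a := rfl

lemma toLin_homFromOne_one {X : SR R} (a : Fin X → R) :
    toLin (homFromOne X a) (1 : Fin 1 → R) = a := by
  rw [toLin_homFromOne_apply, Pi.one_apply, one_smul]

lemma homFromOne_toLin {X : SR R} (f : ob R 1 ⟶ X) :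
    homFromOne X (toLin f (1 : Fin 1 → R)) = f := by
  refine LinearMap.ext fun (x : Fin 1 → R) => ?_
  have hx : x = x 0 • (1 : Fin 1 → R) := by ext i; simp [Subsingleton.elim i 0]
  exact ((toLin f).map_smul _ _).symm.trans (congrArg (toLin f) hx.symm)

lemma toLin_homFromOne_comp_one {X Y : SR R} (a : Fin X → R) (g : X ⟶ Y) :
    toLin (homFromOne X a ≫ g) (1 : Fin 1 → R) = toLin g a :=
  congrArg (toLin g) (toLin_homFromOne_one a)

def homFromOneAddEquiv (X : SR R) : (Fin X → R) ≃+ (ob R 1 ⟶ X) where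
  toFun := homFromOne X
  invFun f := toLin f (1 : Fin 1 → R)
  left_inv := toLin_homFromOne_one
  right_inv := homFromOne_toLin
  map_add' a b := LinearMap.ext fun (x : Fin 1 → R) => smul_add (x 0) a b

lemma homFromOne_comp {X Y : SR R} (a : Fin X → R) (f : X ⟶ Y) :
    homFromOne X a ≫ f = homFromOne Y (toLin f a) :=
  (homFromOne_toLin _).symm.trans (congrArg _ (toLin_homFromOne_comp_one a f))

lemma homFromOne_const_comp_homFromOne {X : SR R} (r : R) (a : Fin X → R) :
    homFromOne (ob R 1) (fun _ : Fin 1 => r) ≫ homFromOne X a = homFromOne X (r • a) :=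
  homFromOne_comp _ _

variable (R) in
def endOneRingEquiv : R ≃+* (End (ob R 1))ᵐᵒᵖ :=
  { (LinearEquiv.funUnique (Fin 1) R R).symm.toAddEquiv.trans
      ((homFromOneAddEquiv (ob R 1)).trans MulOpposite.opAddEquiv) with
    map_mul' r t :=
      MulOpposite.unop_injective (homFromOne_const_comp_homFromOne r (fun _ : Fin 1 => t)).symm }

variable {F : SR R ⥤ SR R} [F.Additive] (hF : F.FullyFaithful) (ι : ob R 1 ≅ F.obj (ob R 1))

noncomputable def semiInnerRingEquiv : R ≃+* R :=
  (endOneRingEquiv R).trans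
    ((RingEquiv.op ((hF.ringEquivEnd (ob R 1)).trans ι.symm.conjRingEquiv)).trans
      (endOneRingEquiv R).symm)

noncomputable def semiInnerAddEquiv (X : SR R) : (Fin X → R) ≃+ (Fin (F.obj X) → R) :=
  (homFromOneAddEquiv X).trans
    ((hF.mapAddEquiv _ _).trans ((ι.precompAddEquiv _).trans (homFromOneAddEquiv _).symm))

lemma semiInnerAddEquiv_apply (X : SR R) (a : Fin X → R) :
    semiInnerAddEquiv hF ι X a = toLin (ι.hom ≫ F.map (homFromOne X a)) (1 : Fin 1 → R) := rfl

lemma hom_comp_map_homFromOne_const (r : R) :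
    ι.hom ≫ F.map (homFromOne (ob R 1) fun _ : Fin 1 => r) =
      homFromOne (ob R 1) (fun _ : Fin 1 => semiInnerRingEquiv hF ι r) ≫ ι.hom := by
  have h := congrArg MulOpposite.unop ((endOneRingEquiv R).apply_symm_apply
    (MulOpposite.op (ι.symm.conj (F.map (homFromOne (ob R 1) fun _ : Fin 1 => r)))))
  change homFromOne (ob R 1) (fun _ : Fin 1 => semiInnerRingEquiv hF ι r) =
    ι.hom ≫ F.map (homFromOne (ob R 1) fun _ : Fin 1 => r) ≫ ι.inv at h
  simp [h]

lemma semiInnerAddEquiv_smul (X : SR R) (r : R) (a : Fin X → R) :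
    semiInnerAddEquiv hF ι X (r • a) =
      semiInnerRingEquiv hF ι r • semiInnerAddEquiv hF ι X a := by
  have hconst : (fun _ : Fin 1 => semiInnerRingEquiv hF ι r) =
      semiInnerRingEquiv hF ι r • (1 : Fin 1 → R) := by ext; simp
  calc toLin (ι.hom ≫ F.map (homFromOne X (r • a))) (1 : Fin 1 → R)
      = toLin (homFromOne (ob R 1) (fun _ : Fin 1 => semiInnerRingEquiv hF ι r) ≫
          ι.hom ≫ F.map (homFromOne X a)) (1 : Fin 1 → R) := by
        rw [← homFromOne_const_comp_homFromOne, F.map_comp, ← Category.assoc,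
          hom_comp_map_homFromOne_const hF ι, Category.assoc]
    _ = toLin (ι.hom ≫ F.map (homFromOne X a)) (fun _ : Fin 1 => semiInnerRingEquiv hF ι r) :=
        toLin_homFromOne_comp_one _ _
    _ = _ := (congrArg _ hconst).trans ((toLin _).map_smul _ _)

lemma map_semiInnerAddEquiv {X Y : SR R} (f : X ⟶ Y) (a : Fin X → R) :
    toLin (F.map f) (semiInnerAddEquiv hF ι X a) = semiInnerAddEquiv hF ι Y (toLin f a) := by
  simp only [semiInnerAddEquiv_apply]
  rw [← homFromOne_comp, F.map_comp]
  rfl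

end SemiInner

end SR

/-- if `R` is a ring with invariant basis number, then every automorphism
`φ` of the category `S_R` is semi-inner: there are a ring automorphism `σ` of `R` and
additive isomorphisms `s_n : R^n ≃+ φ(R^n)` with `s_n (r • a) = σ r • s_n a`, such that
`φ(f) ∘ s_n = s_m ∘ f` for every `R`-linear `f : R^n → R^m`. -/
theorem stmt5 (R : Type) [Ring R]
    (hIBN : ∀ n m : ℕ, Nonempty ((Fin n → R) ≃ₗ[R] (Fin m → R)) → n = m)
    (φ : Aut (Cat.of (SR R))) :
    ∃ (σ : R ≃+* R)
      (s : ∀ n : ℕ, (Fin n → R) ≃+ (Fin ((φ.hom.toFunctor : SR R ⥤ SR R).obj (ob R n)) → R)),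
      (∀ (n : ℕ) (r : R) (a : Fin n → R), s n (r • a) = σ r • s n a) ∧
      (∀ (n m : ℕ) (f : ob R n ⟶ ob R m) (a : Fin n → R),
        toLin ((φ.hom.toFunctor : SR R ⥤ SR R).map f) (s n a) = s m (toLin f a)) := by
  have : InvariantBasisNumber R := ⟨fun e => hIBN _ _ ⟨e⟩⟩
  let F : SR R ⥤ SR R := φ.hom.toFunctor
  have : F.IsEquivalence := (Cat.equivOfIso φ).isEquivalence_functor
  have : F.Additive := Functor.additive_of_preserves_binary_products F
  let hF : F.FullyFaithful := .ofFullyFaithful F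
  let ι : ob R 1 ≅ F.obj (ob R 1) := eqToIso (SR.rank_obj_one F).symm
  exact ⟨SR.semiInnerRingEquiv hF ι, fun n => SR.semiInnerAddEquiv hF ι (ob R n),
    fun n => SR.semiInnerAddEquiv_smul _ _ (ob R n),
    fun _ _ => SR.map_semiInnerAddEquiv _ _⟩
end

section
/- Let R be a ring with invariant basis number. Then every automorphism of the category C_R of finitely generated free left R-modules is semi-inner. -/
open CategoryTheory

/-- The category `C_R`: the full subcategory of the category of left `R`-modules whose
objects are the finitely generated free left `R`-modules. -/
def CR (R : Type) [Ring R] : Type 1 :=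
  ObjectProperty.FullSubcategory (fun M : ModuleCat.{0} R => Module.Finite R M ∧ Module.Free R M)

instance (R : Type) [Ring R] : Category (CR R) :=
  ObjectProperty.FullSubcategory.category _

/-- A morphism of `C_R` is just an `R`-linear map. -/
def homToLin {R : Type} [Ring R] {F G : CR R} (f : F ⟶ G) : F.obj →ₗ[R] G.obj := f.hom.hom

/-- An automorphism `φ` of the category `C_R` is *semi-inner* if there are a ring
automorphism `σ` of `R` and additive isomorphisms `s_F : F ≃+ φ(F)`, one for each object
`F` of `C_R`, with `s_F (r • a) = σ r • s_F a`, such that `φ(f) ∘ s_F = s_G ∘ f` for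
every `R`-linear map `f : F ⟶ G`. -/
def SemiInner (R : Type) [Ring R] (φ : Aut (Cat.of (CR R))) : Prop :=
  ∃ (σ : R ≃+* R)
    (s : ∀ F : CR R, F.obj ≃+ ((φ.hom.toFunctor : CR R ⥤ CR R).obj F).obj),
    (∀ (F : CR R) (r : R) (a : F.obj), s F (r • a) = σ r • s F a) ∧
    (∀ (F G : CR R) (f : F ⟶ G) (a : F.obj),
      homToLin ((φ.hom.toFunctor : CR R ⥤ CR R).map f) (s F a) = s G (homToLin f a))

/-!
An automorphism `Φ` of `C_R` is an equivalence, hence additive, so it preserves biproducts.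
With invariant basis number the rank of a free module is well defined and additive on
biproducts, which gives `rank (Φ F) = rank F * rank (Φ R)`; applied to a preimage of `R`
this forces `rank (Φ R) = 1`, i.e. an isomorphism `u : R ≅ Φ R`. Since `F ≅ Hom(R, F)` via
evaluation at `1`, the map `s_F a = Φ(r ↦ r • a)(u 1)` is additive, bijective and natural, and
`σ = u⁻¹ ∘ s_R` is the ring automorphism making it semilinear.
-/

namespace CategoryTheory

variable {C D : Type*} [Category C] [Category D] [Preadditive C] [Preadditive D]

def Functor.FullyFaithful.mapAddEquiv_s7 {F : C ⥤ D} [F.Additive] (hF : F.FullyFaithful)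
    (X Y : C) : (X ⟶ Y) ≃+ (F.obj X ⟶ F.obj Y) :=
  { hF.homEquiv with map_add' _ _ := F.map_add }

def Iso.precompAddEquiv_s7 {X Y : C} (e : X ≅ Y) (Z : C) : (Y ⟶ Z) ≃+ (X ⟶ Z) :=
  { (e.homCongr (Iso.refl Z)).symm with
    map_add' _ _ := by simp }

end CategoryTheory

open CategoryTheory.Limits

namespace CR

variable {R : Type} [Ring R]

instance : Preadditive (CR R) :=
  inferInstanceAs (Preadditive (ObjectProperty.FullSubcategory _))

instance (F : CR R) : Module.Finite R F.obj := F.property.1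
instance (F : CR R) : Module.Free R F.obj := F.property.2

variable (R) in
def of (M : Type) [AddCommGroup M] [Module R M] [Module.Finite R M] [Module.Free R M] : CR R :=
  ⟨ModuleCat.of R M, ‹_›, ‹_›⟩

def ofHom {F G : CR R} (f : F.obj →ₗ[R] G.obj) : F ⟶ G :=
  ObjectProperty.homMk (ModuleCat.ofHom f)

lemma hom_ext {F G : CR R} {f g : F ⟶ G} (h : homToLin f = homToLin g) : f = g :=
  ObjectProperty.hom_ext _ (ModuleCat.hom_ext h)

lemma homToLin_id (F : CR R) : homToLin (𝟙 F) = LinearMap.id := rfl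

lemma homToLin_comp {F G H : CR R} (f : F ⟶ G) (g : G ⟶ H) :
    homToLin (f ≫ g) = homToLin g ∘ₗ homToLin f := rfl

lemma homToLin_add {F G : CR R} (f g : F ⟶ G) :
    homToLin (f + g) = homToLin f + homToLin g := rfl

def homAddEquiv (F G : CR R) : (F ⟶ G) ≃+ (F.obj →ₗ[R] G.obj) where
  toFun := homToLin
  invFun := ofHom
  left_inv _ := rfl
  right_inv _ := rfl
  map_add' := homToLin_add

def isoOfLinearEquiv {F G : CR R} (e : F.obj ≃ₗ[R] G.obj) : F ≅ G where
  hom := ofHom e.toLinearMap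
  inv := ofHom e.symm.toLinearMap
  hom_inv_id := hom_ext (LinearMap.ext e.symm_apply_apply)
  inv_hom_id := hom_ext (LinearMap.ext e.apply_symm_apply)

def linearEquivOfIso {F G : CR R} (e : F ≅ G) : F.obj ≃ₗ[R] G.obj :=
  .ofLinearMap (homToLin e.hom) (homToLin e.inv)
    (by rw [← homToLin_comp, e.inv_hom_id, homToLin_id])
    (by rw [← homToLin_comp, e.hom_inv_id, homToLin_id])

def binaryBicone (F G : CR R) : BinaryBicone F G where
  pt := of R (F.obj × G.obj)
  fst := ofHom (LinearMap.fst R F.obj G.obj)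
  snd := ofHom (LinearMap.snd R F.obj G.obj)
  inl := ofHom (LinearMap.inl R F.obj G.obj)
  inr := ofHom (LinearMap.inr R F.obj G.obj)

def isBilimitBinaryBicone (F G : CR R) : (binaryBicone F G).IsBilimit :=
  isBinaryBilimitOfTotal _ (hom_ext (LinearMap.ext fun x => Prod.ext (add_zero x.1) (zero_add x.2)))

instance : HasBinaryBiproducts (CR R) where
  has_binary_biproduct F G := .mk ⟨_, isBilimitBinaryBicone F G⟩

noncomputable def rank (F : CR R) : ℕ := Fintype.card (Module.Free.ChooseBasisIndex R F.obj)

theorem nonempty_iso_of_rank_eq {F G : CR R} (h : rank F = rank G) : Nonempty (F ≅ G) :=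
  ⟨isoOfLinearEquiv ((Module.Free.chooseBasis R F.obj).equiv (Module.Free.chooseBasis R G.obj)
    (Fintype.equivOfCardEq h))⟩

theorem isZero_of_fin_zero_fun : IsZero (of R (Fin 0 → R)) :=
  (IsZero.iff_id_eq_zero _).mpr (hom_ext (LinearMap.ext fun _ => funext fun i => i.elim0))

section InvariantBasisNumber

variable [InvariantBasisNumber R]

theorem rank_eq_card_of_basis {F : CR R} {ι : Type*} [Fintype ι] (b : Module.Basis ι R F.obj) :
    rank F = Fintype.card ι :=
  card_eq_of_linearEquiv R ((Module.Free.chooseBasis R F.obj).equivFun.symm ≪≫ₗ b.equivFun)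

theorem rank_congr {F G : CR R} (e : F ≅ G) : rank F = rank G :=
  (rank_eq_card_of_basis ((Module.Free.chooseBasis R F.obj).map (linearEquivOfIso e))).symm

theorem rank_of_self : rank (of R R) = 1 :=
  (rank_eq_card_of_basis (Module.Basis.singleton (Fin 1) R)).trans (Fintype.card_fin 1)

theorem rank_of_fin_fun (n : ℕ) : rank (of R (Fin n → R)) = n :=
  (rank_eq_card_of_basis (Pi.basisFun R (Fin n))).trans (Fintype.card_fin n)

theorem rank_biprod (F G : CR R) : rank (F ⊞ G) = rank F + rank G :=
  (rank_congr (biprod.uniqueUpToIso F G (isBilimitBinaryBicone F G))).symm.trans <|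
    (rank_eq_card_of_basis (F := (binaryBicone F G).pt)
      ((Module.Free.chooseBasis R F.obj).prod (Module.Free.chooseBasis R G.obj))).trans
    (Fintype.card_sum ..)

noncomputable def finSuccFunIso (n : ℕ) :
    of R (Fin (n + 1) → R) ≅ of R R ⊞ of R (Fin n → R) :=
  isoOfLinearEquiv (Fin.consLinearEquiv R fun _ => R).symm ≪≫
    biprod.uniqueUpToIso _ _ (isBilimitBinaryBicone _ _)

theorem rank_map_of_fin_fun (Φ : CR R ⥤ CR R) [Φ.Additive] (n : ℕ) :
    rank (Φ.obj (of R (Fin n → R))) = n * rank (Φ.obj (of R R)) := by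
  have := preservesBinaryBiproducts_of_preservesBiproducts Φ
  induction n with
  | zero =>
    rw [zero_mul, rank_congr ((Φ.map_isZero isZero_of_fin_zero_fun).iso isZero_of_fin_zero_fun),
      rank_of_fin_fun]
  | succ n ih =>
    rw [rank_congr (Φ.mapIso (finSuccFunIso n) ≪≫ Φ.mapBiprod _ _), rank_biprod, ih]
    ring

theorem rank_map (Φ : CR R ⥤ CR R) [Φ.Additive] (F : CR R) :
    rank (Φ.obj F) = rank F * rank (Φ.obj (of R R)) := by
  obtain ⟨e⟩ : Nonempty (F ≅ of R (Fin (rank F) → R)) :=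
    nonempty_iso_of_rank_eq (rank_of_fin_fun _).symm
  rw [rank_congr (Φ.mapIso e), rank_map_of_fin_fun]

theorem nonempty_self_iso_map (Φ : CR R ⥤ CR R) [Φ.Additive] [Φ.EssSurj] :
    Nonempty (of R R ≅ Φ.obj (of R R)) := by
  have h := rank_map Φ (Φ.objPreimage (of R R))
  rw [rank_congr (Φ.objObjPreimageIso (of R R)), rank_of_self] at h
  have h_one : rank (Φ.obj (of R R)) = 1 := Nat.eq_one_of_mul_eq_one_left h.symm
  exact nonempty_iso_of_rank_eq (rank_of_self.trans h_one.symm)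

end InvariantBasisNumber

def evalOne (F : CR R) : (of R R ⟶ F) ≃+ F.obj :=
  (homAddEquiv (of R R) F).trans (LinearMap.ringLmapEquivSelf R ℤ F.obj).toAddEquiv

lemma homToLin_evalOne_symm {F : CR R} (a : F.obj) (r : R) :
    homToLin ((evalOne F).symm a) r = r • a := rfl

lemma evalOne_symm_homToLin {F G : CR R} (f : F ⟶ G) (a : F.obj) :
    (evalOne G).symm (homToLin f a) = (evalOne F).symm a ≫ f := by
  rw [AddEquiv.symm_apply_eq]
  exact congrArg (homToLin f) (one_smul R a).symm

section Transport

variable (Φ : CR R ⥤ CR R) [Φ.Full] [Φ.Faithful] [Φ.Additive] (u : of R R ≅ Φ.obj (of R R))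

noncomputable def transport (F : CR R) : F.obj ≃+ (Φ.obj F).obj :=
  (evalOne F).symm.trans <| ((Functor.FullyFaithful.ofFullyFaithful Φ).mapAddEquiv_s7 _ _).trans <|
    (u.precompAddEquiv_s7 _).trans (evalOne _)

lemma transport_apply (F : CR R) (a : F.obj) :
    transport Φ u F a = homToLin (Φ.map ((evalOne F).symm a)) (homToLin u.hom (1 : R)) :=
  rfl

lemma homToLin_map_transport {F G : CR R} (f : F ⟶ G) (a : F.obj) :
    homToLin (Φ.map f) (transport Φ u F a) = transport Φ u G (homToLin f a) := by
  rw [transport_apply, transport_apply, evalOne_symm_homToLin, Φ.map_comp, homToLin_comp]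
  rfl

noncomputable def scalarAddEquiv : R ≃+ R :=
  (transport Φ u (of R R)).trans (linearEquivOfIso u).symm.toAddEquiv

lemma transport_of_self (r : R) :
    transport Φ u (of R R) r = scalarAddEquiv Φ u r • homToLin u.hom (1 : R) :=
  calc transport Φ u (of R R) r
      = linearEquivOfIso u (scalarAddEquiv Φ u r) :=
        ((linearEquivOfIso u).apply_symm_apply _).symm
    _ = homToLin u.hom (scalarAddEquiv Φ u r • (1 : R)) :=
        congrArg (homToLin u.hom) (mul_one (scalarAddEquiv Φ u r)).symm
    _ = _ := map_smul (homToLin u.hom) _ _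

-- `r • a` is the image of `r` under `R ⟶ F, 1 ↦ a`, so semilinearity is a case of naturality.
lemma transport_smul (F : CR R) (r : R) (a : F.obj) :
    transport Φ u F (r • a) = scalarAddEquiv Φ u r • transport Φ u F a := by
  calc transport Φ u F (r • a)
      = transport Φ u F (homToLin ((evalOne F).symm a) (r : R)) :=
        congrArg _ (homToLin_evalOne_symm a r).symm
    _ = homToLin (Φ.map ((evalOne F).symm a)) (transport Φ u (of R R) r) :=
        (homToLin_map_transport Φ u ((evalOne F).symm a) (r : R)).symm
    _ = scalarAddEquiv Φ u r • transport Φ u F a := by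
        rw [transport_of_self, transport_apply]
        exact map_smul (homToLin (Φ.map ((evalOne F).symm a))) _ _

lemma scalarAddEquiv_mul (r s : R) :
    scalarAddEquiv Φ u (r * s) = scalarAddEquiv Φ u r * scalarAddEquiv Φ u s := by
  have h := congrArg (linearEquivOfIso u).symm (transport_smul Φ u (of R R) r s)
  exact h.trans (map_smul _ _ _)

noncomputable def scalarRingEquiv : R ≃+* R :=
  { scalarAddEquiv Φ u with map_mul' := scalarAddEquiv_mul Φ u }

end Transport

end CR

/-- if `R` is a ring with invariant basis number, then every automorphism
of the category `C_R` of finitely generated free left `R`-modules is semi-inner. -/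
theorem stmt7 (R : Type) [Ring R]
    (hIBN : ∀ n m : ℕ, Nonempty ((Fin n → R) ≃ₗ[R] (Fin m → R)) → n = m)
    (φ : Aut (Cat.of (CR R))) :
    SemiInner R φ := by
  have : InvariantBasisNumber R := ⟨fun e => hIBN _ _ ⟨e⟩⟩
  let Φ : CR R ⥤ CR R := φ.hom.toFunctor
  have : Φ.IsEquivalence := (Cat.equivOfIso φ).isEquivalence_functor
  have : Φ.Additive := Functor.additive_of_preserves_binary_products Φ
  obtain ⟨u⟩ := CR.nonempty_self_iso_map Φ
  exact ⟨CR.scalarRingEquiv Φ u, CR.transport Φ u, CR.transport_smul Φ u,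
    fun _ _ => CR.homToLin_map_transport Φ u⟩
end

section
/- Every automorphism of the category of finitely generated free abelian groups (the full subcategory of abelian groups whose objects are the finitely generated free ℤ-modules) is inner, i.e., naturally isomorphic to the identity functor; likewise, every automorphism of the category of finitely generated free commutative monoids (the full subcategory of commutative monoids whose objects are the monoids isomorphic to ℕ^n for some n ∈ ℕ) is inner. -/
/-!
Write `U` for the forgetful functor to commutative monoids and `Z` for the free object of rank
one (`ℤ`, resp. `ℕ`), which corepresents `U`. Among the free objects `Z` is the only one whose
endomorphism monoid is commutative and nontrivial, so every fully faithful endofunctor `F`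
satisfies `F Z ≅ Z`. Transporting along `Hom(Z, -) ≅ U` then gives bijections `U A ≃ U (F A)`,
natural in `A`. They are additive: a sum `a + b` is the image of `w₁ + w₂` under a map out of the
free object `W` on two generators `w₁, w₂`, and on `W` additivity can be tested on the two
projections to `Z`, where it comes down to `F` preserving the zero endomorphism of `Z`, the unique
absorbing element of `End Z`. An additive natural bijection is a natural isomorphism
`U ≅ F ⋙ U`, and it lifts to `F ≅ 𝟭` because `U` is fully faithful.
-/

open CategoryTheory

/-- The category of finitely generated free abelian groups: the full subcategory of
abelian groups whose objects are the finitely generated free `ℤ`-modules. -/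
def FAb : Type 1 :=
  ObjectProperty.FullSubcategory (fun A : AddCommGrpCat.{0} => Module.Finite ℤ A ∧ Module.Free ℤ A)

instance : Category FAb := ObjectProperty.FullSubcategory.category _

/-- The category of finitely generated free commutative monoids: the full subcategory of
(additive) commutative monoids whose objects are the monoids isomorphic to `ℕ^n` for
some `n ∈ ℕ`. -/
def FCM : Type 1 :=
  ObjectProperty.FullSubcategory (fun A : AddCommMonCat.{0} => ∃ n : ℕ, Nonempty (A ≃+ (Fin n → ℕ)))

instance : Category FCM := ObjectProperty.FullSubcategory.category _

universe u

open Function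

theorem CategoryTheory.Functor.FullyFaithful.hom_comp_map_eq_of_absorbing {C : Type*}
    [Category C] {F : C ⥤ C} (hF : F.FullyFaithful) {Z : C} (e : Z ≅ F.obj Z) {z : Z ⟶ Z}
    (hl : ∀ y, z ≫ y = z) (hr : ∀ y, y ≫ z = z) : e.hom ≫ F.map z = z ≫ e.hom := by
  rw [← Iso.comp_inv_eq, Category.assoc]
  calc e.hom ≫ F.map z ≫ e.inv = e.hom ≫ F.map (z ≫ hF.preimage (e.inv ≫ z ≫ e.hom)) ≫ e.inv := by
        rw [hl]
    _ = (e.hom ≫ F.map z ≫ e.inv) ≫ z := by simp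
    _ = z := hr _

section Corepresenting

variable {C : Type*} [Category C] {U : C ⥤ AddCommMonCat.{u}}

theorem exists_map_apply_eq_of_addEquiv_prod (hU : U.FullyFaithful) {Z W A : C} {g : U.obj Z}
    (hZ : ∀ A, Bijective fun x : Z ⟶ A => U.map x g) (eW : U.obj W ≃+ U.obj Z × U.obj Z)
    (a b : U.obj A) : ∃ h : W ⟶ A, U.map h (eW.symm (g, 0)) = a ∧ U.map h (eW.symm (0, g)) = b := by
  obtain ⟨xa, rfl⟩ := (hZ A).2 a
  obtain ⟨xb, rfl⟩ := (hZ A).2 b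
  refine ⟨hU.preimage (AddCommMonCat.ofHom
    ((U.map xa).hom.comp ((AddMonoidHom.fst _ _).comp eW.toAddMonoidHom) +
      (U.map xb).hom.comp ((AddMonoidHom.snd _ _).comp eW.toAddMonoidHom))), ?_, ?_⟩ <;> simp

variable {Z : C} {g : U.obj Z} (hZ : ∀ A, Bijective fun x : Z ⟶ A => U.map x g)
  {F : C ⥤ C} (hF : F.FullyFaithful) (e : Z ≅ F.obj Z)

noncomputable def transportEquiv (A : C) : U.obj A ≃ U.obj (F.obj A) :=
  (Equiv.ofBijective _ (hZ A)).symm.trans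
    ((hF.homEquiv.trans e.symm.homFromEquiv).trans (Equiv.ofBijective _ (hZ (F.obj A))))

theorem transportEquiv_map_apply {A : C} (x : Z ⟶ A) :
    transportEquiv hZ hF e A (U.map x g) = U.map (e.hom ≫ F.map x) g := by
  simp [transportEquiv, Equiv.ofBijective_symm_apply_apply]

theorem transportEquiv_naturality {A B : C} (f : A ⟶ B) (a : U.obj A) :
    transportEquiv hZ hF e B (U.map f a) = U.map (F.map f) (transportEquiv hZ hF e A a) := by
  obtain ⟨x, rfl⟩ := (hZ A).2 a
  rw [← ConcreteCategory.comp_apply, ← U.map_comp, transportEquiv_map_apply,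
    transportEquiv_map_apply, F.map_comp, ← Category.assoc, U.map_comp, ConcreteCategory.comp_apply]

theorem transportEquiv_zero (hU : U.FullyFaithful) (A : C) : transportEquiv hZ hF e A 0 = 0 := by
  set z : Z ⟶ Z := hU.preimage (AddCommMonCat.ofHom 0)
  have hzg : U.map z g = 0 := by simp [z]
  have hzl : ∀ y, z ≫ y = z := fun y => hU.map_injective (by ext; simp [z])
  have hzr : ∀ y, y ≫ z = z := fun y => hU.map_injective (by ext; simp [z])
  have hτ : transportEquiv hZ hF e Z 0 = 0 := by
    rw [← hzg, transportEquiv_map_apply, hF.hom_comp_map_eq_of_absorbing e hzl hzr, U.map_comp,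
      ConcreteCategory.comp_apply, hzg, map_zero]
  obtain ⟨x, -⟩ := (hZ A).2 0
  rw [← map_zero (ConcreteCategory.hom (U.map x)), transportEquiv_naturality, hτ, map_zero]

theorem transportEquiv_add_of_addEquiv_prod (hU : U.FullyFaithful) {W : C}
    (eW : U.obj W ≃+ U.obj Z × U.obj Z) :
    transportEquiv hZ hF e W (eW.symm (g, 0) + eW.symm (0, g)) =
      transportEquiv hZ hF e W (eW.symm (g, 0)) + transportEquiv hZ hF e W (eW.symm (0, g)) := by
  set τ := transportEquiv hZ hF e
  obtain ⟨u, hu⟩ := (τ W).surjective (τ W (eW.symm (g, 0)) + τ W (eW.symm (0, g)))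
  have hp : ∀ p : W ⟶ Z,
      τ Z (U.map p (eW.symm (g, 0))) + τ Z (U.map p (eW.symm (0, g))) = τ Z g → U.map p u = g :=
    fun p hpw => (τ Z).injective <| by
      rw [transportEquiv_naturality, hu, map_add, ← transportEquiv_naturality,
        ← transportEquiv_naturality, hpw]
  have hτ0 : τ Z 0 = 0 := transportEquiv_zero hZ hF e hU Z
  have hu' : u = eW.symm (g, 0) + eW.symm (0, g) := eW.injective <| Prod.ext
    (by simpa [hτ0] using hp (hU.preimage (AddCommMonCat.ofHom
      ((AddMonoidHom.fst _ _).comp eW.toAddMonoidHom))))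
    (by simpa [hτ0] using hp (hU.preimage (AddCommMonCat.ofHom
      ((AddMonoidHom.snd _ _).comp eW.toAddMonoidHom))))
  rw [← hu', hu]

theorem transportEquiv_add (hU : U.FullyFaithful) {W : C} (eW : U.obj W ≃+ U.obj Z × U.obj Z)
    {A : C} (a b : U.obj A) :
    transportEquiv hZ hF e A (a + b) = transportEquiv hZ hF e A a + transportEquiv hZ hF e A b := by
  obtain ⟨h, rfl, rfl⟩ := exists_map_apply_eq_of_addEquiv_prod hU hZ eW a b
  rw [← map_add, transportEquiv_naturality, transportEquiv_add_of_addEquiv_prod hZ hF e hU eW,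
    map_add, transportEquiv_naturality, transportEquiv_naturality]

noncomputable def transportAddEquiv (hU : U.FullyFaithful) {W : C}
    (eW : U.obj W ≃+ U.obj Z × U.obj Z) (A : C) : U.obj A ≃+ U.obj (F.obj A) :=
  { transportEquiv hZ hF e A with map_add' := transportEquiv_add hZ hF e hU eW }

end Corepresenting

theorem nonempty_iso_id_of_corepresenting {C : Type*} [Category C] {U : C ⥤ AddCommMonCat.{u}}
    (hU : U.FullyFaithful) {Z W : C} {g : U.obj Z}
    (hZ : ∀ A, Bijective fun x : Z ⟶ A => U.map x g) (eW : U.obj W ≃+ U.obj Z × U.obj Z)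
    {F : C ⥤ C} (hF : F.FullyFaithful) (e : Z ≅ F.obj Z) : Nonempty (F ≅ 𝟭 C) := by
  let σ : U ≅ F ⋙ U := NatIso.ofComponents
    (fun A => (transportAddEquiv hZ hF e hU eW A).toAddCommMonCatIso)
    fun f => by ext a; exact transportEquiv_naturality hZ hF e f a
  exact ⟨(hU.whiskeringRight C).preimageIso σ.symm⟩

def IsNontrivialCommMonoid (M : Type*) [Monoid M] : Prop :=
  Nontrivial M ∧ ∀ a b : M, Commute a b

theorem IsNontrivialCommMonoid.map {M N : Type*} [Monoid M] [Monoid N]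
    (h : IsNontrivialCommMonoid M) (e : M ≃* N) : IsNontrivialCommMonoid N :=
  have := h.1
  ⟨e.injective.nontrivial, fun a b => by simpa using (h.2 (e.symm a) (e.symm b)).map e⟩

def AddCommMonCat.endMulEquiv (M : AddCommMonCat.{u}) : End M ≃* AddMonoid.End M where
  toFun f := f.hom
  invFun := ofHom
  left_inv _ := rfl
  right_inv _ := rfl
  map_mul' _ _ := rfl

noncomputable def CategoryTheory.Functor.FullyFaithful.endMulEquivOfAddEquiv {C : Type*}
    [Category C] {U : C ⥤ AddCommMonCat.{u}} (hU : U.FullyFaithful) {X : C} {M : Type u}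
    [AddCommMonoid M] (e : U.obj X ≃+ M) : End X ≃* AddMonoid.End M :=
  (hU.mulEquivEnd X).trans (e.toAddCommMonCatIso.conj.trans (AddCommMonCat.endMulEquiv _))

theorem AddMonoidHom.bijective_apply_one_of_addEquiv {R : Type*} [Semiring R]
    (hR : ∀ (φ : R →+ R) r, φ r = r * φ 1) {ι M : Type*} [AddCommMonoid M] (e : M ≃+ (ι → R)) :
    Bijective fun φ : R →+ M => φ 1 := by
  refine ⟨fun φ ψ h => ?_,
    fun a => ⟨e.symm.toAddMonoidHom.comp ((smulAddHom R _).flip (e a)), by simp⟩⟩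
  have key : ∀ (φ : R →+ M) r i, e (φ r) i = r * e (φ 1) i := fun φ r i =>
    hR ((Pi.evalAddMonoidHom _ i).comp (e.toAddMonoidHom.comp φ)) r
  ext r
  exact e.injective <| funext fun i => by rw [key φ r i, key ψ r i, show φ 1 = ψ 1 from h]

theorem not_commute_addMonoidEnd_pi {R : Type*} [Semiring R] [Nontrivial R] (m : ℕ) :
    ¬ ∀ a b : AddMonoid.End (Fin (m + 2) → R), Commute a b := by
  intro h
  let a : (Fin (m + 2) → R) →+ (Fin (m + 2) → R) :=
    (AddMonoidHom.single _ 0).comp (Pi.evalAddMonoidHom _ 0)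
  let b : (Fin (m + 2) → R) →+ (Fin (m + 2) → R) :=
    (AddMonoidHom.single _ 0).comp (Pi.evalAddMonoidHom _ 1)
  have hab : a.comp b = b.comp a := h a b
  simpa [a, b] using DFunLike.congr_fun hab (Pi.single 1 1)

theorem isNontrivialCommMonoid_addMonoidEnd {R : Type*} [CommSemiring R] [Nontrivial R]
    (hR : ∀ (φ : R →+ R) r, φ r = r * φ 1) : IsNontrivialCommMonoid (AddMonoid.End R) := by
  refine ⟨⟨1, 0, fun h => one_ne_zero (DFunLike.congr_fun h 1)⟩, ?_⟩
  show ∀ φ ψ : R →+ R, φ.comp ψ = ψ.comp φ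
  refine fun φ ψ => AddMonoidHom.ext fun r => ?_
  rw [AddMonoidHom.comp_apply, AddMonoidHom.comp_apply, hR φ (ψ r), hR ψ r, hR ψ (φ r), hR φ r,
    mul_right_comm]

theorem isNontrivialCommMonoid_end_iff {C : Type*} [Category C] {R : Type u} [CommSemiring R]
    [Nontrivial R] (hR : ∀ (φ : R →+ R) r, φ r = r * φ 1) {U : C ⥤ AddCommMonCat.{u}}
    (hU : U.FullyFaithful) {X : C} {n : ℕ} (e : U.obj X ≃+ (Fin n → R)) :
    IsNontrivialCommMonoid (End X) ↔ n = 1 := by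
  refine ⟨fun h => ?_, ?_⟩
  · have h' := h.map (hU.endMulEquivOfAddEquiv e)
    match n, h' with
    | 0, h' =>
      have : Subsingleton (AddMonoid.End (Fin 0 → R)) :=
        ⟨fun _ _ => AddMonoid.End.ext _ fun _ => Subsingleton.elim _ _⟩
      exact absurd h'.1 (not_nontrivial _)
    | 1, _ => rfl
    | m + 2, h' => exact absurd h'.2 (not_commute_addMonoidEnd_pi m)
  · rintro rfl
    exact (isNontrivialCommMonoid_addMonoidEnd hR).map
      (hU.endMulEquivOfAddEquiv (e.trans (AddEquiv.funUnique (Fin 1) R))).symm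

theorem bijective_map_apply_of_addEquiv {C : Type*} [Category C] {R : Type u} [Semiring R]
    (hR : ∀ (φ : R →+ R) r, φ r = r * φ 1) {U : C ⥤ AddCommMonCat.{u}} (hU : U.FullyFaithful)
    {Z A : C} {ι : Type*} (eZ : U.obj Z ≃+ R) (eA : U.obj A ≃+ (ι → R)) :
    Bijective fun x : Z ⟶ A => U.map x (eZ.symm 1) :=
  (AddMonoidHom.bijective_apply_one_of_addEquiv hR eA).comp <|
    eZ.addMonoidHomCongrLeftEquiv.bijective.comp <|
      ConcreteCategory.hom_bijective.comp (hU.map_bijective Z A)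

theorem nonempty_iso_id_of_addEquiv_pi {C : Type*} [Category C] {R : Type u} [CommSemiring R]
    [Nontrivial R] (hR : ∀ (φ : R →+ R) r, φ r = r * φ 1) {U : C ⥤ AddCommMonCat.{u}}
    (hU : U.FullyFaithful) (hrank : ∀ X, ∃ n, Nonempty (U.obj X ≃+ (Fin n → R)))
    (hfree : ∀ n, ∃ X, Nonempty (U.obj X ≃+ (Fin n → R))) {F : C ⥤ C} (hF : F.FullyFaithful) :
    Nonempty (F ≅ 𝟭 C) := by
  obtain ⟨Z, ⟨eZ⟩⟩ := hfree 1
  obtain ⟨W, ⟨eW⟩⟩ := hfree 2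
  obtain ⟨n, ⟨eFZ⟩⟩ := hrank (F.obj Z)
  obtain rfl : n = 1 := (isNontrivialCommMonoid_end_iff hR hU eFZ).1 <|
    ((isNontrivialCommMonoid_end_iff hR hU eZ).2 rfl).map (hF.mulEquivEnd Z)
  let eZR := eZ.trans (AddEquiv.funUnique (Fin 1) R)
  refine nonempty_iso_id_of_corepresenting hU (g := eZR.symm 1) (fun A => ?_)
    (eW.trans <| (LinearEquiv.finTwoArrow ℕ R).toAddEquiv.trans (eZR.symm.prodCongr eZR.symm)) hF
    (hU.preimageIso (eZ.trans eFZ.symm).toAddCommMonCatIso)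
  obtain ⟨m, ⟨eA⟩⟩ := hrank A
  exact bijective_map_apply_of_addEquiv hR hU eZR eA

def AddCommGrpCat.fullyFaithfulForget₂ToAddCommMonCat :
    (forget₂ AddCommGrpCat.{u} AddCommMonCat).FullyFaithful where
  preimage f := AddCommGrpCat.ofHom f.hom

theorem FAb.nonempty_iso_id {F : FAb ⥤ FAb} (hF : F.FullyFaithful) : Nonempty (F ≅ 𝟭 FAb) :=
  nonempty_iso_id_of_addEquiv_pi (R := ℤ) (fun φ r => by simpa using map_zsmul φ r 1)
    ((ObjectProperty.fullyFaithfulι _).comp AddCommGrpCat.fullyFaithfulForget₂ToAddCommMonCat)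
    (fun X => by
      obtain ⟨_, _⟩ := X.property
      exact ⟨_, ⟨(Module.finBasis ℤ X.obj).equivFun.toAddEquiv⟩⟩)
    (fun n => ⟨⟨AddCommGrpCat.of (Fin n → ℤ), inferInstance, inferInstance⟩, ⟨AddEquiv.refl _⟩⟩) hF

theorem FCM.nonempty_iso_id {F : FCM ⥤ FCM} (hF : F.FullyFaithful) : Nonempty (F ≅ 𝟭 FCM) :=
  nonempty_iso_id_of_addEquiv_pi (R := ℕ) (fun φ r => by simpa using map_nsmul φ r 1)
    (ObjectProperty.fullyFaithfulι _) (fun X => X.property)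
    (fun n => ⟨⟨AddCommMonCat.of (Fin n → ℕ), n, ⟨AddEquiv.refl _⟩⟩, ⟨AddEquiv.refl _⟩⟩) hF

/-- every automorphism of the category of finitely generated free abelian
groups is inner, and every automorphism of the category of finitely generated free
commutative monoids is inner. -/
theorem stmt10 :
    (∀ φ : Aut (Cat.of FAb), Nonempty ((φ.hom.toFunctor : FAb ⥤ FAb) ≅ 𝟭 FAb)) ∧
    (∀ φ : Aut (Cat.of FCM), Nonempty ((φ.hom.toFunctor : FCM ⥤ FCM) ≅ 𝟭 FCM)) :=
  ⟨fun φ => FAb.nonempty_iso_id (Cat.equivOfIso φ).fullyFaithfulFunctor,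
    fun φ => FCM.nonempty_iso_id (Cat.equivOfIso φ).fullyFaithfulFunctor⟩
end

section
/- Let K be an integral domain and L a Lie algebra over K that is free as a K-module. Then every automorphism θ of U(L) as a left module over itself is given by right multiplication by a unit of K: there exists a unit c of K such that θ(u) = u · ι(c) for all u ∈ U(L). -/
noncomputable section
namespace Stmt17Aux

attribute [local instance 100] LieRing.ofAssociativeRing

open MvPolynomial

variable {σ : Type} [LinearOrder σ]

/-- degree of a monomial exponent vector -/
def degF (d : σ →₀ ℕ) : ℕ := d.sum fun _ n => n

/-- exponent vector of a list of variables -/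
def listM (l : List σ) : σ →₀ ℕ := (↑l : Multiset σ).toFinsupp

/-- canonical sorted list of an exponent vector -/
def toL (d : σ →₀ ℕ) : List σ := (Finsupp.toMultiset d).sort (· ≤ ·)

@[simp] lemma listM_nil : listM ([] : List σ) = 0 := by
  simp [listM]

@[simp] lemma listM_cons (i : σ) (t : List σ) :
    listM (i :: t) = listM t + Finsupp.single i 1 := by
  unfold listM
  rw [← Multiset.cons_coe, ← Multiset.singleton_add, Multiset.toFinsupp_add,
    Multiset.toFinsupp_singleton, add_comm]

@[simp] lemma degF_listM (l : List σ) : degF (listM l) = l.length := by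
  classical
  unfold degF listM
  rw [show (fun (_ : σ) (n : ℕ) => n) = (fun _ => id) from rfl, Multiset.toFinsupp_sum_eq]
  simp

@[simp] lemma listM_toL (d : σ →₀ ℕ) : listM (toL d) = d := by
  classical
  simp [listM, toL, Multiset.sort_eq]

lemma toL_sorted (d : σ →₀ ℕ) : (toL d).Pairwise (· ≤ ·) :=
  Multiset.pairwise_sort _ _

lemma toL_listM_of_sorted {l : List σ} (hl : l.Pairwise (· ≤ ·)) : toL (listM l) = l := by
  classical
  refine List.Perm.eq_of_pairwise' (toL_sorted _) hl ?_
  refine Multiset.coe_eq_coe.mp ?_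
  show ((((listM l).toMultiset.sort (· ≤ ·)) : List σ) : Multiset σ) = _
  rw [Multiset.sort_eq]
  simp [listM]

@[simp] lemma length_toL (d : σ →₀ ℕ) : (toL d).length = degF d := by
  classical
  have : ((toL d : List σ) : Multiset σ) = Finsupp.toMultiset d := by
    simp [toL, Multiset.sort_eq]
  have h := congrArg Multiset.card this
  simp [Finsupp.card_toMultiset] at h
  exact h

lemma mem_toL {d : σ →₀ ℕ} {k : σ} (hk : k ∈ toL d) : k ∈ d.support := by
  classical
  rw [toL, Multiset.mem_sort, Finsupp.mem_toMultiset] at hk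
  exact hk

variable (K : Type) [CommRing K]

/-- the monomial attached to a list of variables -/
def Mn (l : List σ) : MvPolynomial σ K := monomial (listM l) 1

@[simp] lemma Mn_nil : Mn K ([] : List σ) = 1 := by simp [Mn]

lemma Mn_cons (i : σ) (t : List σ) : Mn K (i :: t) = X i * Mn K t := by
  simp [Mn, X, monomial_mul, add_comm]

lemma X_mul_monomial_one (i : σ) (d : σ →₀ ℕ) :
    (X i : MvPolynomial σ K) * monomial d 1 = monomial (d + Finsupp.single i 1) 1 := by
  simp [X, monomial_mul, add_comm]

section NT
variable [Nontrivial K]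
@[simp] lemma totalDegree_Mn (l : List σ) : (Mn K l).totalDegree = l.length := by
  simp [Mn, totalDegree_monomial, degF]
  simpa [degF] using degF_listM (σ := σ) l
end NT

variable {K}

lemma degF_le_totalDegree {p : MvPolynomial σ K} {d : σ →₀ ℕ}
    (h : d ∈ p.support) : degF d ≤ p.totalDegree := le_totalDegree h

section Act

variable {L : Type} [LieRing L] [LieAlgebra K L]

/-- The PBW-style recursive action of basis vectors on monomials. -/
def A (b : Module.Basis σ K L) : σ → List σ → MvPolynomial σ K
  | i, [] => X i
  | i, j :: t =>
    if i ≤ j then X i * Mn K (j :: t)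
    else
      X j * X i * Mn K t
      + ∑ m ∈ ((A b i t - X i * Mn K t).support.filter fun m => degF m ≤ t.length).attach,
          coeff m.1 (A b i t - X i * Mn K t) • A b j (toL m.1)
      + ∑ k ∈ (b.repr ⁅b i, b j⁆).support.attach, (b.repr ⁅b i, b j⁆) k.1 • A b k.1 t
termination_by i l => l.length
decreasing_by
  all_goals first
    | (have h := m.2
       simp only [Finset.mem_filter] at h
       simp only [length_toL, List.length_cons]
       omega)
    | simp

variable (b : Module.Basis σ K L)

@[simp] lemma A_nil (i : σ) : A b i [] = X i := by rw [A]

lemma A_cons_le {i j : σ} (t : List σ) (h : i ≤ j) :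
    A b i (j :: t) = X i * Mn K (j :: t) := by rw [A]; simp [h]

lemma A_easy {i : σ} {l : List σ} (h : ∀ k ∈ l, i ≤ k) :
    A b i l = X i * Mn K l := by
  cases l with
  | nil => simp
  | cons j t => exact A_cons_le b t (h j (by simp))

lemma X_mul_Mn_totalDegree (i : σ) (l : List σ) :
    ((X i : MvPolynomial σ K) * Mn K l).totalDegree ≤ l.length + 1 := by
  refine (totalDegree_mul _ _).trans ?_
  have h1 : (X i : MvPolynomial σ K).totalDegree ≤ 1 := by
    rw [show (X i : MvPolynomial σ K) = monomial (Finsupp.single i 1) 1 from rfl]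
    exact (totalDegree_monomial_le _ _).trans (by simp)
  have h2 : (Mn K l : MvPolynomial σ K).totalDegree ≤ l.length := by
    refine (totalDegree_monomial_le _ _).trans ?_
    exact (degF_listM (σ := σ) l).le
  omega

lemma A_deg_aux : ∀ (n : ℕ) (l : List σ), l.length ≤ n → ∀ i : σ,
    (A b i l - X i * Mn K l).totalDegree ≤ l.length := by
  intro n
  induction n with
  | zero =>
    intro l hl i
    have : l = [] := by cases l <;> simp_all
    subst this; simp
  | succ n ih =>
    intro l hl i
    cases l with
    | nil => simp
    | cons j t =>
      have ht : t.length ≤ n := by simpa using hl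
      by_cases hij : i ≤ j
      · rw [A_cons_le b t hij, sub_self]; simp
      · rw [A]
        simp only [if_neg hij]
        set w := A b i t - X i * Mn K t with hw
        have hwdeg : w.totalDegree ≤ t.length := ih t ht i
        have hXX : (X j : MvPolynomial σ K) * X i * Mn K t = X i * Mn K (j :: t) := by
          rw [Mn_cons]; ring
        rw [hXX]
        rw [show ∀ p q r : MvPolynomial σ K, p + q + r - p = q + r from fun p q r => by ring]
        refine (totalDegree_add _ _).trans (max_le ?_ ?_)
        · refine (totalDegree_finset_sum _ _).trans (Finset.sup_le ?_)
          rintro ⟨m, hm⟩ -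
          simp only [Finset.mem_filter] at hm
          refine (totalDegree_smul_le _ _).trans ?_
          have hmdeg : degF m ≤ t.length := (degF_le_totalDegree hm.1).trans hwdeg
          have hlen : (toL m).length ≤ n := by
            rw [length_toL]; omega
          have hinv := ih (toL m) hlen j
          calc (A b j (toL m)).totalDegree
              = ((A b j (toL m) - X j * Mn K (toL m)) + X j * Mn K (toL m)).totalDegree := by
                congr 1; ring
            _ ≤ max ((A b j (toL m) - X j * Mn K (toL m)).totalDegree)
                  ((X j * Mn K (toL m) : MvPolynomial σ K).totalDegree) := totalDegree_add _ _
            _ ≤ (toL m).length + 1 := max_le (hinv.trans (by omega)) (X_mul_Mn_totalDegree j _)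
            _ ≤ t.length + 1 := by rw [length_toL]; omega
        · refine (totalDegree_finset_sum _ _).trans (Finset.sup_le ?_)
          rintro ⟨k, hk⟩ -
          refine (totalDegree_smul_le _ _).trans ?_
          have hinv := ih t ht k
          calc (A b k t).totalDegree
              = ((A b k t - X k * Mn K t) + X k * Mn K t).totalDegree := by congr 1; ring
            _ ≤ _ := totalDegree_add _ _
            _ ≤ t.length + 1 := max_le (hinv.trans (by omega)) (X_mul_Mn_totalDegree k _)

lemma A_deg (i : σ) (l : List σ) :
    (A b i l - X i * Mn K l).totalDegree ≤ l.length :=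
  A_deg_aux b l.length l le_rfl i

lemma A_totalDegree (i : σ) (l : List σ) : (A b i l).totalDegree ≤ l.length + 1 := by
  calc (A b i l).totalDegree
      = ((A b i l - X i * Mn K l) + X i * Mn K l).totalDegree := by congr 1; ring
    _ ≤ _ := totalDegree_add _ _
    _ ≤ l.length + 1 := max_le ((A_deg b i l).trans (by omega)) (X_mul_Mn_totalDegree i _)

/-- linear extension of `A` to all polynomials -/
def AP (i : σ) : MvPolynomial σ K →ₗ[K] MvPolynomial σ K :=
  (basisMonomials σ K).constr K fun d => A b i (toL d)

@[simp] lemma AP_monomial (i : σ) (d : σ →₀ ℕ) (c : K) :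
    AP b i (monomial d c) = c • A b i (toL d) := by
  have h1 : (monomial d c : MvPolynomial σ K) = c • monomial d 1 := by
    rw [smul_monomial, smul_eq_mul, mul_one]
  have h2 := (basisMonomials σ K).constr_basis K (fun d => A b i (toL d)) d
  rw [coe_basisMonomials] at h2
  rw [h1, map_smul, AP]
  exact congrArg (c • ·) h2

lemma AP_apply (i : σ) (p : MvPolynomial σ K) :
    AP b i p = ∑ d ∈ p.support, coeff d p • A b i (toL d) := by
  conv_lhs => rw [p.as_sum, map_sum]
  exact Finset.sum_congr rfl fun d _ => AP_monomial b i d _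

lemma AP_Mn_sorted {l : List σ} (hl : l.Pairwise (· ≤ ·)) (i : σ) :
    AP b i (Mn K l) = A b i l := by
  rw [Mn, AP_monomial, toL_listM_of_sorted hl, one_smul]

lemma A_cons_gt {i j : σ} (t : List σ) (h : ¬ i ≤ j) :
    A b i (j :: t) = X j * X i * Mn K t + AP b j (A b i t - X i * Mn K t)
      + ((b.repr ⁅b i, b j⁆).support.sum fun k => (b.repr ⁅b i, b j⁆) k • A b k t) := by
  classical
  rw [A]
  simp only [if_neg h]
  congr 1
  · congr 1
    rw [Finset.sum_attach _ (fun m => coeff m (A b i t - X i * Mn K t) • A b j (toL m)),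
      AP_apply]
    exact Finset.sum_filter_of_ne fun m hm _ => (degF_le_totalDegree hm).trans (A_deg b i t)
  · exact Finset.sum_attach _ (fun k => (b.repr ⁅b i, b j⁆) k • A b k t)

/-- the action of a general element of `L` -/
def ActL : L →ₗ[K] MvPolynomial σ K →ₗ[K] MvPolynomial σ K :=
  b.constr K fun i => AP b i

@[simp] lemma ActL_basis (i : σ) : ActL b (b i) = AP b i := b.constr_basis K _ i

lemma Mn_toL (d : σ →₀ ℕ) : Mn K (toL d) = monomial d 1 := by rw [Mn, listM_toL]

lemma mem_support_listM {l : List σ} {e : σ} : e ∈ (listM l).support ↔ e ∈ l := by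
  classical
  simp [listM, Multiset.toFinsupp_support]

lemma ActL_Mn (x : L) {l : List σ} (hl : l.Pairwise (· ≤ ·)) :
    ActL b x (Mn K l) = ∑ k ∈ (b.repr x).support, (b.repr x) k • A b k l := by
  have h : ActL b x = (b.repr x).sum fun k c => c • AP b k := b.constr_apply K _ x
  rw [h, Finsupp.sum, LinearMap.sum_apply]
  refine Finset.sum_congr rfl fun k _ => ?_
  rw [LinearMap.smul_apply, Mn, AP_monomial, toL_listM_of_sorted hl, one_smul]

/-- the module relation -/
def SRel (x y : L) (p : MvPolynomial σ K) : Prop :=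
  ActL b ⁅x, y⁆ p = ActL b x (ActL b y p) - ActL b y (ActL b x p)

lemma srel_add {x y : L} {p q : MvPolynomial σ K} (h1 : SRel b x y p) (h2 : SRel b x y q) :
    SRel b x y (p + q) := by
  unfold SRel at *
  simp only [map_add]
  rw [h1, h2]; abel

lemma srel_swap {x y : L} {p : MvPolynomial σ K} (h : SRel b x y p) : SRel b y x p := by
  unfold SRel at *
  rw [← lie_skew, map_neg, LinearMap.neg_apply, h]; abel

lemma srel_easy {i j : σ} (hji : j < i) {l : List σ} (hl : l.Pairwise (· ≤ ·))
    (hjl : ∀ k ∈ l, j ≤ k) : SRel b (b i) (b j) (Mn K l) := by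
  have hl' : (j :: l).Pairwise (· ≤ ·) := List.pairwise_cons.mpr ⟨hjl, hl⟩
  have h1 : ActL b (b j) (Mn K l) = Mn K (j :: l) := by
    rw [ActL_basis, AP_Mn_sorted b hl, A_easy b hjl, ← Mn_cons]
  have h2 : ActL b (b i) (Mn K (j :: l)) =
      X j * X i * Mn K l + AP b j (A b i l - X i * Mn K l) + ActL b ⁅b i, b j⁆ (Mn K l) := by
    rw [ActL_basis, AP_Mn_sorted b hl', A_cons_gt b l (not_le.mpr hji)]
    congr 1
    exact (ActL_Mn b _ hl).symm
  have h3 : ActL b (b i) (Mn K l) = A b i l := by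
    rw [ActL_basis, AP_Mn_sorted b hl]
  have hAPXi : AP b j ((X i : MvPolynomial σ K) * Mn K l) = X j * (X i * Mn K l) := by
    have e1 : (X i : MvPolynomial σ K) * Mn K l = Mn K (toL (listM (i :: l))) := by
      rw [Mn_toL, ← Mn_cons (K := K) i l, Mn]
    rw [e1, AP_Mn_sorted b (toL_sorted _), A_easy b ?_, ← e1]
    intro e he
    rcases List.mem_cons.mp (mem_support_listM.mp (mem_toL he)) with rfl | h
    · exact hji.le
    · exact hjl e h
  have h4 : AP b j (A b i l) = X j * (X i * Mn K l) + AP b j (A b i l - X i * Mn K l) := by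
    conv_lhs => rw [show A b i l = (X i * Mn K l) + (A b i l - X i * Mn K l) from by ring]
    rw [map_add, hAPXi]
  unfold SRel
  rw [h1, h3, h2, ActL_basis, h4]
  ring

lemma Mn_totalDegree_le (l : List σ) : (Mn K l : MvPolynomial σ K).totalDegree ≤ l.length := by
  refine (totalDegree_monomial_le _ _).trans ?_
  exact (degF_listM (σ := σ) l).le

lemma srel_addY {x y1 y2 : L} {p : MvPolynomial σ K}
    (h1 : SRel b x y1 p) (h2 : SRel b x y2 p) : SRel b x (y1 + y2) p := by
  unfold SRel at *
  simp only [lie_add, map_add, LinearMap.add_apply]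
  rw [h1, h2]; abel

lemma srel_smulY {x y : L} {c : K} {p : MvPolynomial σ K}
    (h : SRel b x y p) : SRel b x (c • y) p := by
  unfold SRel at *
  simp only [lie_smul, map_smul, LinearMap.smul_apply]
  rw [h, smul_sub]

lemma srel_zeroY {x : L} {p : MvPolynomial σ K} : SRel b x 0 p := by
  unfold SRel; simp

lemma srel_smulP {x y : L} (c : K) {p : MvPolynomial σ K}
    (h : SRel b x y p) : SRel b x y (c • p) := by
  unfold SRel at *
  simp only [map_smul]
  rw [h, smul_sub]

theorem srel_all : ∀ (n : ℕ) (x y : L) (p : MvPolynomial σ K),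
    p.totalDegree ≤ n → SRel b x y p := by
  intro n
  induction n using Nat.strong_induction_on with
  | _ n ih =>
  have key : ∀ l : List σ, l.Pairwise (· ≤ ·) → l.length ≤ n → ∀ i j : σ,
      SRel b (b i) (b j) (Mn K l) := by
    intro l hl hlen i j
    have main : ∀ i j : σ, j < i → SRel b (b i) (b j) (Mn K l) := by
      intro i j hji
      by_cases hall : ∀ e ∈ l, j ≤ e
      · exact srel_easy b hji hl hall
      · push_neg at hall
        obtain ⟨e0, he0, he0j⟩ := hall
        cases l with
        | nil => simp at he0
        | cons k t =>
          obtain ⟨hkt, ht⟩ := List.pairwise_cons.mp hl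
          have hkj : k < j := by
            rcases List.mem_cons.mp he0 with rfl | h
            · exact he0j
            · exact lt_of_le_of_lt (hkt e0 h) he0j
          have hki : k < i := hkj.trans hji
          have htlen : t.length < n := by
            have : (k :: t).length ≤ n := hlen
            simp only [List.length_cons] at this
            omega
          have hm'deg : (Mn K t : MvPolynomial σ K).totalDegree ≤ t.length :=
            Mn_totalDegree_le t
          set x := b i with hx
          set y := b j with hy
          set z := b k with hz
          set m' := Mn K t with hm'def
          have ihRel : ∀ (u v : L) (p : MvPolynomial σ K), p.totalDegree ≤ t.length →
              SRel b u v p := fun u v p hp => ih t.length htlen u v p hp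
          have hMl : Mn K (k :: t) = ActL b z m' := by
            rw [ActL_basis, AP_Mn_sorted b ht, A_easy b hkt, Mn_cons]
          have hsplit : ∀ a : σ, A b a t = Mn K (toL (listM (a :: t))) + (A b a t - X a * Mn K t) := by
            intro a
            rw [Mn_toL, show ((monomial (listM (a :: t))) (1:K)) = Mn K (a :: t) from rfl, Mn_cons]
            ring
          have hSMn : ∀ a : σ, k < a → ∀ c : σ, k < c →
              SRel b (b c) (b k) (Mn K (toL (listM (a :: t)))) := by
            intro a hka c hkc
            refine srel_easy b hkc (toL_sorted _) ?_
            intro e he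
            rcases List.mem_cons.mp (mem_support_listM.mp (mem_toL he)) with rfl | h
            · exact hka.le
            · exact hkt e h
          have hq : ∀ a : σ, k < a → ∀ c : σ, k < c → SRel b (b c) (b k) (A b a t) := by
            intro a hka c hkc
            have h2 := srel_add b (hSMn a hka c hkc) (ihRel (b c) (b k) _ (A_deg b a t))
            rwa [← hsplit a] at h2
          have hqy : ActL b y m' = A b j t := by rw [hy, ActL_basis, AP_Mn_sorted b ht]
          have hqx : ActL b x m' = A b i t := by rw [hx, ActL_basis, AP_Mn_sorted b ht]
          have R1 := ihRel y z m' hm'deg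
          have R2 := ihRel x z m' hm'deg
          have R3 := ihRel x y m' hm'deg
          have R6 := ihRel ⁅x,y⁆ z m' hm'deg
          have R7 := ihRel x ⁅y,z⁆ m' hm'deg
          have R8 := ihRel y ⁅x,z⁆ m' hm'deg
          have R4 : SRel b x z (ActL b y m') := by rw [hqy, hx, hz]; exact hq j hkj i hki
          have R5 : SRel b y z (ActL b x m') := by rw [hqx, hy, hz]; exact hq i hki j hkj
          unfold SRel at R1 R2 R3 R4 R5 R6 R7 R8 ⊢
          rw [hMl]
          have hy1 : ActL b y (ActL b z m') = ActL b z (ActL b y m') + ActL b ⁅y,z⁆ m' := by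
            rw [R1]; abel
          have hx1 : ActL b x (ActL b z m') = ActL b z (ActL b x m') + ActL b ⁅x,z⁆ m' := by
            rw [R2]; abel
          rw [hy1, hx1, map_add, map_add]
          have h4 : ActL b x (ActL b z (ActL b y m'))
              = ActL b z (ActL b x (ActL b y m')) + ActL b ⁅x,z⁆ (ActL b y m') := by
            rw [R4]; abel
          have h5 : ActL b y (ActL b z (ActL b x m'))
              = ActL b z (ActL b y (ActL b x m')) + ActL b ⁅y,z⁆ (ActL b x m') := by
            rw [R5]; abel
          have h7 : ActL b x (ActL b ⁅y,z⁆ m')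
              = ActL b ⁅y,z⁆ (ActL b x m') + ActL b ⁅x,⁅y,z⁆⁆ m' := by
            rw [R7]; abel
          have h8 : ActL b y (ActL b ⁅x,z⁆ m')
              = ActL b ⁅x,z⁆ (ActL b y m') + ActL b ⁅y,⁅x,z⁆⁆ m' := by
            rw [R8]; abel
          have h6 : ActL b ⁅x,y⁆ (ActL b z m')
              = ActL b z (ActL b ⁅x,y⁆ m') + ActL b ⁅⁅x,y⁆,z⁆ m' := by
            rw [R6]; abel
          have J : ActL b ⁅⁅x,y⁆,z⁆ m' = ActL b ⁅x,⁅y,z⁆⁆ m' - ActL b ⁅y,⁅x,z⁆⁆ m' := by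
            rw [lie_lie, map_sub, LinearMap.sub_apply]
          rw [h4, h5, h7, h8, h6, R3, map_sub, J]
          abel
    rcases lt_trichotomy i j with hij | rfl | hij
    · exact srel_swap b (main j i hij)
    · unfold SRel; simp
    · exact main i j hij
  have key2 : ∀ l : List σ, l.Pairwise (· ≤ ·) → l.length ≤ n → ∀ x y : L,
      SRel b x y (Mn K l) := by
    intro l hl hlen
    have s1 : ∀ (i : σ) (y : L), SRel b (b i) y (Mn K l) := by
      intro i y
      have hy : y ∈ Submodule.span K (Set.range b) := by rw [b.span_eq]; trivial
      refine Submodule.span_induction (p := fun y _ => SRel b (b i) y (Mn K l))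
        ?_ (srel_zeroY b) (fun u v _ _ hu hv => srel_addY b hu hv)
        (fun c u _ hu => srel_smulY b hu) hy
      rintro _ ⟨j, rfl⟩
      exact key l hl hlen i j
    intro x y
    have hx : x ∈ Submodule.span K (Set.range b) := by rw [b.span_eq]; trivial
    refine Submodule.span_induction (p := fun x _ => SRel b x y (Mn K l))
      ?_ ?_ (fun u v _ _ hu hv => ?_) (fun c u _ hu => ?_) hx
    · rintro _ ⟨i, rfl⟩; exact s1 i y
    · unfold SRel; simp
    · exact srel_swap b (srel_addY b (srel_swap b hu) (srel_swap b hv))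
    · exact srel_swap b (srel_smulY b (srel_swap b hu))
  intro x y p hp
  have hc : ∀ d ∈ p.support, SRel b x y (monomial d (coeff d p)) := by
    intro d hd
    have hdn : degF d ≤ n := (degF_le_totalDegree hd).trans hp
    have hmono : (monomial d (coeff d p) : MvPolynomial σ K) = coeff d p • Mn K (toL d) := by
      rw [Mn_toL, smul_monomial, smul_eq_mul, mul_one]
    rw [hmono]
    exact srel_smulP b _ (key2 (toL d) (toL_sorted d) (by rw [length_toL]; exact hdn) x y)
  have hsum : ∀ (s : Finset (σ →₀ ℕ)) (f : (σ →₀ ℕ) → MvPolynomial σ K),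
      (∀ d ∈ s, SRel b x y (f d)) → SRel b x y (∑ d ∈ s, f d) := by
    intro s f hf
    induction s using Finset.induction_on with
    | empty => unfold SRel; simp
    | @insert a s hni ih2 =>
      rw [Finset.sum_insert hni]
      exact srel_add b (hf _ (by simp)) (ih2 fun d hd => hf d (by simp [hd]))
  have hfin := hsum p.support (fun d => monomial d (coeff d p)) hc
  rwa [← p.as_sum] at hfin

/-- the Lie algebra morphism to endomorphisms -/
def phi : L →ₗ⁅K⁆ Module.End K (MvPolynomial σ K) :=
  { ActL b with
    map_lie' := by
      intro x y
      apply LinearMap.ext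
      intro p
      have h := srel_all b p.totalDegree x y p le_rfl
      unfold SRel at h
      rw [LieRing.of_associative_ring_bracket]
      simpa using h }

/-- the representation of the universal enveloping algebra -/
def rho : UniversalEnvelopingAlgebra K L →ₐ[K] Module.End K (MvPolynomial σ K) :=
  UniversalEnvelopingAlgebra.lift K (phi b)

@[simp] lemma rho_ι (x : L) :
    rho b (UniversalEnvelopingAlgebra.ι K x) = ActL b x := by
  rw [rho, UniversalEnvelopingAlgebra.lift_ι_apply]
  rfl

/-- image in `U(L)` of a word in the basis -/
def ιw (w : List σ) : UniversalEnvelopingAlgebra K L :=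
  (w.map fun i => UniversalEnvelopingAlgebra.ι K (b i)).prod

@[simp] lemma ιw_nil : ιw b ([] : List σ) = 1 := rfl

lemma ιw_cons (i : σ) (t : List σ) :
    ιw b (i :: t) = UniversalEnvelopingAlgebra.ι K (b i) * ιw b t := by
  simp [ιw]

lemma ιw_append (w w' : List σ) : ιw b (w ++ w') = ιw b w * ιw b w' := by
  simp [ιw]

/-- span of words of length at most `n` -/
def Wd (n : ℕ) : Submodule K (UniversalEnvelopingAlgebra K L) :=
  Submodule.span K {u | ∃ w : List σ, w.length ≤ n ∧ ιw b w = u}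

/-- span of sorted words of length at most `n` -/
def Ws (n : ℕ) : Submodule K (UniversalEnvelopingAlgebra K L) :=
  Submodule.span K {u | ∃ w : List σ, w.Pairwise (· ≤ ·) ∧ w.length ≤ n ∧ ιw b w = u}

lemma Wd_mono {m n : ℕ} (h : m ≤ n) : Wd b m ≤ Wd b n :=
  Submodule.span_mono fun u ⟨w, hw, he⟩ => ⟨w, hw.trans h, he⟩

lemma Ws_mono {m n : ℕ} (h : m ≤ n) : Ws b m ≤ Ws b n :=
  Submodule.span_mono fun u ⟨w, hs, hw, he⟩ => ⟨w, hs, hw.trans h, he⟩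

lemma ιw_mem_Wd (w : List σ) : ιw b w ∈ Wd b w.length :=
  Submodule.subset_span ⟨w, le_rfl, rfl⟩

lemma Wd_mul {m n : ℕ} {u v : UniversalEnvelopingAlgebra K L}
    (hu : u ∈ Wd b m) (hv : v ∈ Wd b n) : u * v ∈ Wd b (m + n) := by
  have h := Submodule.mul_mem_mul hu hv
  simp only [Wd] at h
  rw [Submodule.span_mul_span] at h
  refine Submodule.span_le.mpr ?_ h
  rintro x hx
  rw [Set.mem_mul] at hx
  obtain ⟨p, ⟨w, hw, rfl⟩, q, ⟨w', hw', rfl⟩, rfl⟩ := hx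
  rw [← ιw_append]
  exact Submodule.subset_span ⟨w ++ w', by simp; omega, rfl⟩

lemma ιL_mem_Wd (x : L) : UniversalEnvelopingAlgebra.ι K x ∈ Wd b 1 := by
  have hx : x ∈ Submodule.span K (Set.range b) := by rw [b.span_eq]; trivial
  refine Submodule.span_induction
    (p := fun x _ => UniversalEnvelopingAlgebra.ι K x ∈ Wd b 1) ?_ ?_ ?_ ?_ hx
  · rintro _ ⟨i, rfl⟩
    have : UniversalEnvelopingAlgebra.ι K (b i) = ιw b [i] := by simp [ιw]
    rw [this]
    exact Submodule.subset_span ⟨[i], by simp, rfl⟩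
  · simp only [map_zero]
    exact Submodule.zero_mem _
  · intro u v _ _ h1 h2
    simp only [map_add]
    exact Submodule.add_mem _ h1 h2
  · intro c u _ h1
    rw [map_smul]
    exact Submodule.smul_mem _ _ h1

lemma exists_mem_Wd (u : UniversalEnvelopingAlgebra K L) : ∃ n, u ∈ Wd b n := by
  obtain ⟨t, rfl⟩ := RingCon.mkₐ_surjective (α := K) _ u
  induction t using TensorAlgebra.induction with
  | algebraMap r =>
    refine ⟨0, ?_⟩
    rw [AlgHom.commutes, Algebra.algebraMap_eq_smul_one]
    exact Submodule.smul_mem _ _ (Submodule.subset_span ⟨[], by simp, rfl⟩)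
  | ι x =>
    refine ⟨1, ?_⟩
    have : (RingCon.mkₐ K (UniversalEnvelopingAlgebra.ringCon K L)) (TensorAlgebra.ι K x)
        = UniversalEnvelopingAlgebra.ι K x := rfl
    rw [this]
    exact ιL_mem_Wd b x
  | mul a1 a2 ih1 ih2 =>
    obtain ⟨n1, h1⟩ := ih1
    obtain ⟨n2, h2⟩ := ih2
    exact ⟨n1 + n2, by rw [map_mul]; exact Wd_mul b h1 h2⟩
  | add a1 a2 ih1 ih2 =>
    obtain ⟨n1, h1⟩ := ih1
    obtain ⟨n2, h2⟩ := ih2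
    refine ⟨max n1 n2, ?_⟩
    rw [map_add]
    exact Submodule.add_mem _ (Wd_mono b (le_max_left _ _) h1)
      (Wd_mono b (le_max_right _ _) h2)

lemma ιw_perm : ∀ {w w' : List σ}, w.Perm w' → ιw b w - ιw b w' ∈ Wd b (w.length - 1) := by
  intro w w' h
  induction h with
  | nil => simp only [sub_self]; exact Submodule.zero_mem _
  | @cons a l1 l2 h ih =>
    rcases List.eq_nil_or_concat l1 with rfl | _
    · rw [h.nil_eq.symm]
      simp only [sub_self]
      exact Submodule.zero_mem _
    · have hlen : 1 ≤ l1.length := by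
        rcases l1 with _ | _
        · simp_all
        · simp
      rw [ιw_cons, ιw_cons, ← mul_sub]
      have := Wd_mul b (ιL_mem_Wd b (b a)) ih
      refine Wd_mono b ?_ this
      simp only [List.length_cons]
      omega
  | swap a a' l =>
    have hbr : UniversalEnvelopingAlgebra.ι K ⁅b a', b a⁆
        = UniversalEnvelopingAlgebra.ι K (b a') * UniversalEnvelopingAlgebra.ι K (b a)
          - UniversalEnvelopingAlgebra.ι K (b a) * UniversalEnvelopingAlgebra.ι K (b a') := by
      rw [LieHom.map_lie, LieRing.of_associative_ring_bracket]
    have heq : ιw b (a' :: a :: l) - ιw b (a :: a' :: l)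
        = UniversalEnvelopingAlgebra.ι K ⁅b a', b a⁆ * ιw b l := by
      rw [ιw_cons, ιw_cons, ιw_cons, ιw_cons, hbr, sub_mul]
      simp [mul_assoc]
    rw [heq]
    have := Wd_mul b (ιL_mem_Wd b ⁅b a', b a⁆) (ιw_mem_Wd b l)
    refine Wd_mono b ?_ this
    simp only [List.length_cons]
    omega
  | trans h1 h2 ih1 ih2 =>
    have heq : ∀ u v z : UniversalEnvelopingAlgebra K L, u - z = (u - v) + (v - z) := by
      intro u v z; abel
    rw [heq _ (ιw b _) _]
    refine Submodule.add_mem _ ih1 ?_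
    rw [h1.length_eq]
    exact ih2

lemma Wd_le_Ws : ∀ n, Wd b n ≤ Ws b n := by
  intro n
  induction n using Nat.strong_induction_on with
  | _ n ih =>
  refine Submodule.span_le.mpr ?_
  rintro _ ⟨w, hwlen, rfl⟩
  rcases Nat.eq_zero_or_pos n with rfl | hn
  · have : w = [] := List.length_eq_zero_iff.mp (Nat.le_zero.mp hwlen)
    subst this
    exact Submodule.subset_span ⟨[], by simp, by simp, rfl⟩
  · set w' := toL (listM w) with hw'
    have hperm : w.Perm w' := by
      refine Multiset.coe_eq_coe.mp ?_
      rw [hw', toL]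
      rw [Multiset.sort_eq]
      simp [listM]
    have h1 : ιw b w' ∈ Ws b n := by
      refine Submodule.subset_span ⟨w', toL_sorted _, ?_, rfl⟩
      rw [← hperm.length_eq]; exact hwlen
    have h2 : ιw b w - ιw b w' ∈ Wd b (n - 1) :=
      Wd_mono b (by omega) (ιw_perm b hperm)
    have h3 : ιw b w - ιw b w' ∈ Ws b n :=
      Ws_mono b (by omega) (ih (n-1) (by omega) h2)
    have : ιw b w = ιw b w' + (ιw b w - ιw b w') := by abel
    rw [this]
    exact Submodule.add_mem _ h1 h3

/-- all monomials of `p` have degree `< N` -/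
def SmallDeg (N : ℕ) (p : MvPolynomial σ K) : Prop := ∀ d ∈ p.support, degF d < N

lemma smallDeg_zero {N : ℕ} : SmallDeg N (0 : MvPolynomial σ K) := by
  intro d hd; simp at hd

lemma smallDeg_mono {N N' : ℕ} (h : N ≤ N') {p : MvPolynomial σ K}
    (hp : SmallDeg N p) : SmallDeg N' p := fun d hd => lt_of_lt_of_le (hp d hd) h

lemma smallDeg_add {N : ℕ} {p q : MvPolynomial σ K} (hp : SmallDeg N p) (hq : SmallDeg N q) :
    SmallDeg N (p + q) := by
  intro d hd
  rcases Finset.mem_union.mp (MvPolynomial.support_add hd) with h | h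
  · exact hp d h
  · exact hq d h

lemma smallDeg_smul {N : ℕ} (c : K) {p : MvPolynomial σ K} (hp : SmallDeg N p) :
    SmallDeg N (c • p) := by
  intro d hd
  refine hp d ?_
  have := MvPolynomial.support_smul (a := c) (f := p)
  exact this hd

lemma smallDeg_sum {α : Type*} {N : ℕ} (s : Finset α) (f : α → MvPolynomial σ K)
    (h : ∀ x ∈ s, SmallDeg N (f x)) : SmallDeg N (∑ x ∈ s, f x) := by
  classical
  induction s using Finset.induction_on with
  | empty => simpa using smallDeg_zero
  | @insert a s hni ih =>
    rw [Finset.sum_insert hni]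
    exact smallDeg_add (h a (by simp)) (ih fun x hx => h x (by simp [hx]))

lemma smallDeg_of_totalDegree_lt {N : ℕ} {p : MvPolynomial σ K}
    (h : p.totalDegree < N) : SmallDeg N p :=
  fun d hd => lt_of_le_of_lt (degF_le_totalDegree hd) h

lemma AP_smallDeg {N : ℕ} (i : σ) {p : MvPolynomial σ K} (hp : SmallDeg N p) :
    SmallDeg (N + 1) (AP b i p) := by
  rw [AP_apply]
  refine smallDeg_sum _ _ fun d hd => ?_
  refine smallDeg_smul _ fun e he => ?_
  have h1 : degF e ≤ (toL d).length + 1 :=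
    (degF_le_totalDegree he).trans (A_totalDegree b i (toL d))
  have h2 : degF d < N := hp d hd
  rw [length_toL] at h1
  omega

lemma AP_sub_X_smallDeg (i : σ) (p : MvPolynomial σ K) :
    SmallDeg (p.totalDegree + 1) (AP b i p - X i * p) := by
  have hrep : AP b i p - X i * p
      = ∑ d ∈ p.support, coeff d p • (A b i (toL d) - X i * monomial d 1) := by
    simp only [smul_sub]
    rw [Finset.sum_sub_distrib, ← AP_apply]
    congr 1
    have : ∀ d ∈ p.support, coeff d p • ((X i : MvPolynomial σ K) * monomial d 1)
        = X i * monomial d (coeff d p) := by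
      intro d _
      rw [← mul_smul_comm, smul_monomial, smul_eq_mul, mul_one]
    rw [Finset.sum_congr rfl this, ← Finset.mul_sum, MvPolynomial.support_sum_monomial_coeff]
  rw [hrep]
  refine smallDeg_sum _ _ fun d hd => ?_
  refine smallDeg_smul _ fun e he => ?_
  have h0 : (A b i (toL d) - X i * monomial d 1) = A b i (toL d) - X i * Mn K (toL d) := by
    rw [Mn_toL]
  have h1 : degF e ≤ (toL d).length := by
    refine (degF_le_totalDegree he).trans ?_
    rw [h0]
    exact A_deg b i (toL d)
  rw [length_toL] at h1
  have h2 : degF d ≤ p.totalDegree := degF_le_totalDegree hd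
  omega

lemma rho_word_deg : ∀ (w : List σ) (r : MvPolynomial σ K),
    SmallDeg (w.length + r.totalDegree) (rho b (ιw b w) r - Mn K w * r) := by
  intro w
  induction w with
  | nil =>
    intro r
    simp only [ιw_nil, map_one, Mn_nil, one_mul, Module.End.one_apply, sub_self]
    exact smallDeg_zero
  | cons i t ih =>
    intro r
    have hstep : rho b (ιw b (i :: t)) r = AP b i (rho b (ιw b t) r) := by
      rw [ιw_cons, map_mul, Module.End.mul_apply, rho_ι, ActL_basis]
    set s' := rho b (ιw b t) r - Mn K t * r with hs'
    have hdecomp : rho b (ιw b (i :: t)) r - Mn K (i :: t) * r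
        = (AP b i (Mn K t * r) - X i * (Mn K t * r)) + AP b i s' := by
      rw [hstep, Mn_cons, hs']
      rw [show rho b (ιw b t) r = Mn K t * r + (rho b (ιw b t) r - Mn K t * r) from by abel]
      rw [map_add]
      ring
    rw [hdecomp]
    refine smallDeg_add (smallDeg_mono ?_ (AP_sub_X_smallDeg b i (Mn K t * r))) ?_
    · have : (Mn K t * r).totalDegree ≤ t.length + r.totalDegree := by
        refine (totalDegree_mul _ _).trans ?_
        have := Mn_totalDegree_le (K := K) t
        omega
      simp only [List.length_cons]
      omega
    · have := AP_smallDeg b i (N := t.length + r.totalDegree) (ih r)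
      refine smallDeg_mono ?_ this
      simp only [List.length_cons]
      omega

lemma support_sum_pred {α : Type*} (s : Finset α) (f : α → MvPolynomial σ K)
    (pr : (σ →₀ ℕ) → Prop) (h : ∀ x ∈ s, ∀ d ∈ (f x).support, pr d) :
    ∀ d ∈ (∑ x ∈ s, f x).support, pr d := by
  classical
  induction s using Finset.induction_on with
  | empty => intro d hd; simp at hd
  | @insert a s hni ih =>
    rw [Finset.sum_insert hni]
    intro d hd
    rcases Finset.mem_union.mp (MvPolynomial.support_add hd) with h1 | h1
    · exact h a (by simp) d h1
    · exact ih (fun x hx => h x (by simp [hx])) d h1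

lemma degF_add (d e : σ →₀ ℕ) : degF (d + e) = degF d + degF e := by
  unfold degF
  rw [Finsupp.sum_add_index' (fun _ => rfl) (fun _ _ _ => rfl)]

@[simp] lemma degF_zero : degF (0 : σ →₀ ℕ) = 0 := by
  unfold degF
  exact Finsupp.sum_zero_index

section Master

variable [IsDomain K]

include b in
theorem master (a c : UniversalEnvelopingAlgebra K L) (h1 : a * c = 1) :
    ∃ u : K, a = algebraMap K (UniversalEnvelopingAlgebra K L) u := by
  classical
  have hex : ∃ n, a ∈ Ws b n := by
    obtain ⟨n, hn⟩ := exists_mem_Wd b a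
    exact ⟨n, Wd_le_Ws b n hn⟩
  set m := Nat.find hex with hm_def
  have hma : a ∈ Ws b m := Nat.find_spec hex
  rcases Nat.eq_zero_or_pos m with hm0 | hmpos
  · rw [hm0] at hma
    have hsub : Ws b 0 ≤ Submodule.span K {(1 : UniversalEnvelopingAlgebra K L)} := by
      refine Submodule.span_le.mpr ?_
      rintro _ ⟨w, hs, hlen, rfl⟩
      have hwnil : w = [] := List.length_eq_zero_iff.mp (Nat.le_zero.mp hlen)
      subst hwnil
      rw [ιw_nil]
      exact Submodule.mem_span_singleton_self 1
    obtain ⟨u, hu⟩ := Submodule.mem_span_singleton.mp (hsub hma)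
    exact ⟨u, by rw [← hu, Algebra.algebraMap_eq_smul_one]⟩
  · exfalso
    set q : MvPolynomial σ K := rho b c 1 with hq_def
    have hq1 : rho b a q = 1 := by
      have h2 := congrArg (rho b) h1
      rw [map_mul, map_one] at h2
      have h3 := congrArg (fun f : Module.End K (MvPolynomial σ K) => f 1) h2
      simpa [Module.End.mul_apply] using h3
    have hqne : q ≠ 0 := by
      intro h
      rw [h, map_zero] at hq1
      exact one_ne_zero hq1.symm
    rw [Ws] at hma
    obtain ⟨cf, hsupp, hsum⟩ := Submodule.mem_span_set.mp hma
    choose W hWsort hWlen hWe using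
      fun (v : UniversalEnvelopingAlgebra K L) (hv : v ∈ cf.support) =>
        hsupp (Finset.mem_coe.mpr hv)
    set nq := q.totalDegree with hnq
    set S1 := cf.support.attach.filter (fun v => (W v.1 v.2).length = m) with hS1
    by_cases hS1e : S1 = ∅
    · have hmem : a ∈ Ws b (m - 1) := by
        rw [← hsum, Finsupp.sum]
        refine Submodule.sum_mem _ ?_
        intro v hv
        refine Submodule.smul_mem _ _ (Submodule.subset_span ⟨W v hv, hWsort v hv, ?_, hWe v hv⟩)
        have hne : (W v hv).length ≠ m := by
          intro hcon
          have hmem2 : (⟨v, hv⟩ : {x // x ∈ cf.support}) ∈ S1 :=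
            Finset.mem_filter.mpr ⟨Finset.mem_attach _ _, hcon⟩
          rw [hS1e] at hmem2
          simp at hmem2
        have := hWlen v hv
        omega
      exact Nat.find_min hex (by omega) hmem
    · obtain ⟨v0, hv0⟩ := Finset.nonempty_of_ne_empty hS1e
      set T : MvPolynomial σ K := ∑ v ∈ S1, cf v.1 • Mn K (W v.1 v.2) with hT
      have hS1len : ∀ v ∈ S1, (W v.1 v.2).length = m :=
        fun v hv => (Finset.mem_filter.mp hv).2
      have hinj : ∀ v ∈ S1, ∀ v' ∈ S1,
          listM (W v.1 v.2) = listM (W v'.1 v'.2) → v = v' := by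
        intro v _ v' _ h
        have h2 : W v.1 v.2 = W v'.1 v'.2 := by
          rw [← toL_listM_of_sorted (hWsort v.1 v.2), ← toL_listM_of_sorted (hWsort v'.1 v'.2), h]
        have h3 : v.1 = v'.1 := by
          rw [← hWe v.1 v.2, ← hWe v'.1 v'.2, h2]
        exact Subtype.ext h3
      have hT_mons : ∀ d ∈ T.support, degF d = m := by
        refine support_sum_pred _ _ _ ?_
        intro v hv d hd
        have hsub := MvPolynomial.support_smul (a := cf v.1) (f := Mn K (W v.1 v.2)) hd
        have : d = listM (W v.1 v.2) := by
          have h2 := MvPolynomial.support_monomial_subset (s := listM (W v.1 v.2))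
            (a := (1 : K)) hsub
          simpa using h2
        rw [this, degF_listM, hS1len v hv]
      have hTne : T ≠ 0 := by
        have hcoeff : coeff (listM (W v0.1 v0.2)) T = cf v0.1 := by
          rw [hT, MvPolynomial.coeff_sum]
          rw [Finset.sum_eq_single v0]
          · rw [MvPolynomial.coeff_smul, Mn, coeff_monomial, if_pos rfl]
            simp
          · intro v hv hvne
            rw [MvPolynomial.coeff_smul, Mn, coeff_monomial]
            rw [if_neg fun hcon => hvne (hinj v hv v0 hv0 hcon)]
            simp
          · intro hcon
            exact absurd hv0 hcon
        intro h0
        rw [h0] at hcoeff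
        simp only [coeff_zero] at hcoeff
        exact Finsupp.mem_support_iff.mp v0.2 hcoeff.symm
      set qtop : MvPolynomial σ K :=
        ∑ d ∈ q.support.filter (fun d => degF d = nq), monomial d (coeff d q) with hqtop
      set qlow : MvPolynomial σ K := q - qtop with hqlow
      have hct : ∀ d : σ →₀ ℕ, coeff d qtop
          = if d ∈ q.support.filter (fun d => degF d = nq) then coeff d q else 0 := by
        intro d
        rw [hqtop, MvPolynomial.coeff_sum]
        rw [Finset.sum_congr rfl fun e _ => coeff_monomial d e (coeff e q)]
        exact Finset.sum_ite_eq' _ _ _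
      have hqtop_mons : ∀ d ∈ qtop.support, degF d = nq := by
        rw [hqtop]
        refine support_sum_pred _ _ _ ?_
        intro e he d hd
        have h2 := MvPolynomial.support_monomial_subset hd
        have h3 : d = e := by simpa using h2
        subst h3
        exact (Finset.mem_filter.mp he).2
      have hqlow_mons : ∀ d ∈ qlow.support, degF d < nq := by
        intro d hd
        have hcl : coeff d qlow = coeff d q - coeff d qtop := by
          rw [hqlow, coeff_sub]
        have hdne : coeff d qlow ≠ 0 := MvPolynomial.mem_support_iff.mp hd
        by_cases hdq : d ∈ q.support
        · by_cases hdeq : degF d = nq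
          · exfalso
            have hmem : d ∈ q.support.filter (fun d => degF d = nq) :=
              Finset.mem_filter.mpr ⟨hdq, hdeq⟩
            rw [hcl, hct d, if_pos hmem] at hdne
            simp at hdne
          · have h5 : degF d ≤ q.totalDegree := degF_le_totalDegree hdq
            omega
        · exfalso
          have h0 : coeff d q = 0 := MvPolynomial.notMem_support_iff.mp hdq
          have hnmem : d ∉ q.support.filter (fun d => degF d = nq) :=
            fun hcon => hdq (Finset.mem_filter.mp hcon).1
          rw [hcl, hct d, if_neg hnmem, h0] at hdne
          simp at hdne
      have hqtopne : qtop ≠ 0 := by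
        obtain ⟨d0, hd0q, hd0max⟩ : ∃ d0 ∈ q.support, degF d0 = nq := by
          have hne : q.support.Nonempty := MvPolynomial.support_nonempty.mpr hqne
          obtain ⟨d0, hd0, he⟩ := Finset.exists_mem_eq_sup q.support hne (fun d => degF d)
          exact ⟨d0, hd0, (show q.totalDegree = degF d0 from he).symm⟩
        intro h0
        have h6 := hct d0
        rw [h0] at h6
        rw [if_pos (Finset.mem_filter.mpr ⟨hd0q, hd0max⟩)] at h6
        simp only [coeff_zero] at h6
        exact MvPolynomial.mem_support_iff.mp hd0q h6.symm
      have hTqne : T * qtop ≠ 0 := mul_ne_zero hTne hqtopne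
      obtain ⟨dstar, hdstar⟩ := MvPolynomial.support_nonempty.mpr hTqne
      have hdstar_deg : degF dstar = m + nq := by
        have h2 := MvPolynomial.support_mul _ _ hdstar
        rw [Finset.mem_add] at h2
        obtain ⟨d1, hd1, d2, hd2, rfl⟩ := h2
        rw [degF_add, hT_mons d1 hd1, hqtop_mons d2 hd2]
      have hrhoa : rho b a q = ∑ v ∈ cf.support.attach, cf v.1 • (rho b v.1 q) := by
        have hend : rho b a = ∑ v ∈ cf.support.attach, cf v.1 • rho b v.1 := by
          conv_lhs => rw [← hsum, Finsupp.sum]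
          rw [map_sum, ← Finset.sum_attach cf.support (fun v => rho b (cf v • v))]
          exact Finset.sum_congr rfl fun v _ => by rw [map_smul]
        rw [hend, LinearMap.sum_apply]
        exact Finset.sum_congr rfl fun v _ => by rw [LinearMap.smul_apply]
      set g : {x // x ∈ cf.support} → MvPolynomial σ K :=
        fun v => if (W v.1 v.2).length = m then Mn K (W v.1 v.2) * qtop else 0 with hg
      have hTq : T * qtop = ∑ v ∈ cf.support.attach, cf v.1 • g v := by
        rw [hT, Finset.sum_mul]
        rw [Finset.sum_congr rfl
          (fun (v : {x // x ∈ cf.support}) (_ : v ∈ S1) => smul_mul_assoc (cf v.1) (Mn K (W v.1 v.2)) qtop)]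
        rw [hS1, Finset.sum_filter]
        refine Finset.sum_congr rfl fun v _ => ?_
        by_cases hc : (W v.1 v.2).length = m
        · rw [hg]; simp only [if_pos hc]
        · rw [hg]; simp only [if_neg hc, smul_zero]
      have pervfact : ∀ v : {x // x ∈ cf.support},
          ∀ d ∈ ((rho b v.1 q) - g v).support, degF d < m + nq := by
        intro v d hd
        have hword := rho_word_deg b (W v.1 v.2) q
        rw [hWe v.1 v.2] at hword
        by_cases hc : (W v.1 v.2).length = m
        · have hsplit : rho b v.1 q - g v
              = (rho b v.1 q - Mn K (W v.1 v.2) * q) + Mn K (W v.1 v.2) * qlow := by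
            rw [hg]; simp only [if_pos hc]; rw [hqlow]; ring
          rw [hsplit] at hd
          rcases Finset.mem_union.mp (MvPolynomial.support_add hd) with h2 | h2
          · have h3 := hword d h2
            rw [hc] at h3
            omega
          · have h4 := MvPolynomial.support_mul _ _ h2
            rw [Finset.mem_add] at h4
            obtain ⟨d1, hd1, d2, hd2, rfl⟩ := h4
            have h5 : d1 = listM (W v.1 v.2) := by
              simpa using MvPolynomial.support_monomial_subset hd1
            have h6 : degF d1 = m := by rw [h5, degF_listM, hc]
            have h7 := hqlow_mons d2 hd2
            rw [degF_add]
            omega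
        · have hlen2 : (W v.1 v.2).length < m := lt_of_le_of_ne (hWlen v.1 v.2) hc
          have hsplit : rho b v.1 q - g v
              = (rho b v.1 q - Mn K (W v.1 v.2) * q) + Mn K (W v.1 v.2) * q := by
            rw [hg]; simp only [if_neg hc]; ring
          rw [hsplit] at hd
          rcases Finset.mem_union.mp (MvPolynomial.support_add hd) with h2 | h2
          · have h3 := hword d h2
            omega
          · have h4 := MvPolynomial.support_mul _ _ h2
            rw [Finset.mem_add] at h4
            obtain ⟨d1, hd1, d2, hd2, rfl⟩ := h4
            have h5 : d1 = listM (W v.1 v.2) := by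
              simpa using MvPolynomial.support_monomial_subset hd1
            have h6 : degF d1 < m := by rw [h5, degF_listM]; exact hlen2
            have h7 : degF d2 ≤ nq := degF_le_totalDegree hd2
            rw [degF_add]
            omega
      have hE : ∀ d ∈ (rho b a q - T * qtop).support, degF d < m + nq := by
        intro d hd
        rw [hrhoa, hTq, ← Finset.sum_sub_distrib] at hd
        rw [Finset.sum_congr rfl (fun (v : {x // x ∈ cf.support}) (_ : v ∈ cf.support.attach) =>
          (smul_sub (cf v.1) (rho b v.1 q) (g v)).symm)] at hd
        refine support_sum_pred _ _ (fun d => degF d < m + nq) ?_ d hd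
        intro v _ e he
        exact pervfact v e (MvPolynomial.support_smul he)
      have hcE : coeff dstar (rho b a q - T * qtop) = 0 := by
        by_contra hne
        have h8 : dstar ∈ (rho b a q - T * qtop).support := MvPolynomial.mem_support_iff.mpr hne
        have := hE dstar h8
        omega
      have hcoeff_eq : coeff dstar (rho b a q) = coeff dstar (T * qtop) := by
        rw [coeff_sub] at hcE
        exact sub_eq_zero.mp hcE
      have hne0 : coeff dstar (T * qtop) ≠ 0 := MvPolynomial.mem_support_iff.mp hdstar
      rw [hq1] at hcoeff_eq
      have hdstar_ne : dstar ≠ 0 := by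
        intro h0; rw [h0, degF_zero] at hdstar_deg; omega
      rw [coeff_one, if_neg (fun hcon : 0 = dstar => hdstar_ne hcon.symm)] at hcoeff_eq
      exact hne0 hcoeff_eq.symm

end Master
end Act
end Stmt17Aux

/-- if `K` is an integral domain and `L` a Lie algebra over `K` that is
free as a `K`-module, then every automorphism `θ` of `U(L)` as a left module over itself
is right multiplication by (the image of) a unit of `K`. -/
theorem stmt17 (K L : Type) [CommRing K] [IsDomain K] [LieRing L] [LieAlgebra K L]
    [Module.Free K L]
    (θ : UniversalEnvelopingAlgebra K L
      ≃ₗ[UniversalEnvelopingAlgebra K L] UniversalEnvelopingAlgebra K L) :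
    ∃ c : Kˣ, ∀ u : UniversalEnvelopingAlgebra K L,
      θ u = u * algebraMap K (UniversalEnvelopingAlgebra K L) c := by
  classical
  letI : LinearOrder (Module.Free.ChooseBasisIndex K L) :=
    IsWellOrder.linearOrder WellOrderingRel
  let b : Module.Basis (Module.Free.ChooseBasisIndex K L) K L := Module.Free.chooseBasis K L
  have hθ : ∀ u : UniversalEnvelopingAlgebra K L, θ u = u * θ 1 := by
    intro u
    conv_lhs => rw [show u = u • (1 : UniversalEnvelopingAlgebra K L) from by
      rw [smul_eq_mul, mul_one]]
    rw [map_smul, smul_eq_mul]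
  have hθs : ∀ u : UniversalEnvelopingAlgebra K L, θ.symm u = u * θ.symm 1 := by
    intro u
    conv_lhs => rw [show u = u • (1 : UniversalEnvelopingAlgebra K L) from by
      rw [smul_eq_mul, mul_one]]
    rw [map_smul, smul_eq_mul]
  have h1 : θ 1 * θ.symm 1 = 1 := by
    have h := θ.symm_apply_apply 1
    rwa [hθs (θ 1)] at h
  have h2 : θ.symm 1 * θ 1 = 1 := by
    have h := θ.apply_symm_apply 1
    rwa [hθ (θ.symm 1)] at h
  obtain ⟨u, hu⟩ := Stmt17Aux.master b (θ 1) (θ.symm 1) h1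
  obtain ⟨u', hu'⟩ := Stmt17Aux.master b (θ.symm 1) (θ 1) h2
  have hinj : Function.Injective (algebraMap K (UniversalEnvelopingAlgebra K L)) := by
    intro r s hrs
    have h3 := congrArg
      (fun z => Stmt17Aux.rho b z (1 : MvPolynomial (Module.Free.ChooseBasisIndex K L) K)) hrs
    simp only [AlgHom.commutes, Module.algebraMap_end_apply] at h3
    have h4 : r • (1 : MvPolynomial (Module.Free.ChooseBasisIndex K L) K) = s • 1 := h3
    rw [MvPolynomial.smul_eq_C_mul, MvPolynomial.smul_eq_C_mul, mul_one, mul_one] at h4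
    exact MvPolynomial.C_injective _ _ h4
  have huu : u * u' = 1 := by
    refine hinj ?_
    rw [map_mul, ← hu, ← hu', h1, map_one]
  refine ⟨⟨u, u', huu, by rw [mul_comm]; exact huu⟩, ?_⟩
  intro v
  rw [hθ v, hu]
end
end
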